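/- arXiv:2412.03106 — 7 statements merged into one kernel-verified Lean document; each statement's English description precedes it below -/
import Mathlib

section
/- Necessary condition for global convergence of state evolution (Lemma 7): Suppose φ and ψ satisfy Assumption A and let α ∈ (0,1]. If for every initialization (τ_S^{(0)}, τ_L^{(0)}) ∈ (0,∞)×(0,∞) the noiseless SE sequences satisfy lim_{t→∞} τ_S^{(t)} = 0 and lim_{t→∞} τ_L^{(t)} = 0, then necessarily α ≥ α_nec, where α_nec := sup_{x>0} (φ(x)+ψ(x))/(φ(x)+ψ(x)+x). -/
/-!
If `α < (φ x + ψ x) / (φ x + ψ x + x)` for some `x > 0`, then with `β = 1/α - 1` we have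
`x < β (φ x + ψ x)`. Both arguments fed to `φ` and `ψ` by one SE step are at least `β (τ_S + τ_L)`,
so by monotonicity the region `{τ_S, τ_L ≥ 0, x ≤ β (τ_S + τ_L)}` is mapped into itself. An orbit
started in this region keeps `β (τ_S + τ_L) ≥ x > 0` and cannot converge to `(0, 0)`.
-/

open Set Filter Topology

namespace StateEvolution

variable {φ ψ : ℝ → ℝ} {α x : ℝ}

variable (φ ψ α) in
noncomputable def step (q : ℝ × ℝ) : ℝ × ℝ :=
  (φ ((1/α - 1) * q.1 + (1/α) * q.2), ψ ((1/α - 1) * q.2 + (1/α) * q.1))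

variable (α x) in
def trappingRegion : Set (ℝ × ℝ) := {q | 0 ≤ q.1 ∧ 0 ≤ q.2 ∧ x ≤ (1/α - 1) * (q.1 + q.2)}

lemma mul_add_le_step_arg {s l : ℝ} (hl : 0 ≤ l) :
    (1/α - 1) * (s + l) ≤ (1/α - 1) * s + (1/α) * l := by
  linear_combination hl

lemma mapsTo_step_trappingRegion (hφ : MonotoneOn φ (Ici 0)) (hψ : MonotoneOn ψ (Ici 0))
    (hφnn : ∀ y ∈ Ici (0:ℝ), 0 ≤ φ y) (hψnn : ∀ y ∈ Ici (0:ℝ), 0 ≤ ψ y)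
    (hβ : 0 ≤ 1/α - 1) (hx : 0 ≤ x) (hxφψ : x ≤ (1/α - 1) * (φ x + ψ x)) :
    MapsTo (step φ ψ α) (trappingRegion α x) (trappingRegion α x) := by
  rintro ⟨s, l⟩ ⟨hs, hl, hsl⟩
  have ha : x ≤ (1/α - 1) * s + (1/α) * l := hsl.trans (mul_add_le_step_arg hl)
  have hb : x ≤ (1/α - 1) * l + (1/α) * s := (add_comm s l ▸ hsl).trans (mul_add_le_step_arg hs)
  have hφa := hφ (mem_Ici.2 hx) (mem_Ici.2 (hx.trans ha)) ha
  have hψb := hψ (mem_Ici.2 hx) (mem_Ici.2 (hx.trans hb)) hb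
  refine ⟨hφnn _ (mem_Ici.2 (hx.trans ha)), hψnn _ (mem_Ici.2 (hx.trans hb)), ?_⟩
  calc x ≤ (1/α - 1) * (φ x + ψ x) := hxφψ
    _ ≤ (1/α - 1) * ((step φ ψ α (s, l)).1 + (step φ ψ α (s, l)).2) :=
      mul_le_mul_of_nonneg_left (add_le_add hφa hψb) hβ

lemma not_tendsto_zero_of_forall_mem_trappingRegion (hx : 0 < x) {p : ℕ → ℝ × ℝ}
    (hp : ∀ n, p n ∈ trappingRegion α x) :
    ¬ (Tendsto (fun n ↦ (p n).1) atTop (𝓝 0) ∧ Tendsto (fun n ↦ (p n).2) atTop (𝓝 0)) := by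
  rintro ⟨h₁, h₂⟩
  have hlim : Tendsto (fun n ↦ (1/α - 1) * ((p n).1 + (p n).2)) atTop (𝓝 0) := by
    simpa using (h₁.add h₂).const_mul (1/α - 1)
  exact hx.not_ge (ge_of_tendsto' hlim fun n ↦ (hp n).2.2)

lemma exists_orbit_not_tendsto_zero (hφ : MonotoneOn φ (Ici 0)) (hψ : MonotoneOn ψ (Ici 0))
    (hφnn : ∀ y ∈ Ici (0:ℝ), 0 ≤ φ y) (hψnn : ∀ y ∈ Ici (0:ℝ), 0 ≤ ψ y)
    (hβ : 0 < 1/α - 1) (hx : 0 < x) (hxφψ : x ≤ (1/α - 1) * (φ x + ψ x)) :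
    ∃ τS τL : ℕ → ℝ, 0 < τS 0 ∧ 0 < τL 0 ∧
      (∀ t, τS (t+1) = φ ((1/α - 1) * τS t + (1/α) * τL t)) ∧
      (∀ t, τL (t+1) = ψ ((1/α - 1) * τL t + (1/α) * τS t)) ∧
      ¬ (Tendsto τS atTop (𝓝 0) ∧ Tendsto τL atTop (𝓝 0)) := by
  set q₀ : ℝ × ℝ := (x / (1/α - 1), x / (1/α - 1))
  have hq₀ : q₀ ∈ trappingRegion α x := by
    refine ⟨by positivity, by positivity, ?_⟩
    show x ≤ (1/α - 1) * (x / (1/α - 1) + x / (1/α - 1))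
    rw [mul_add, mul_div_cancel₀ _ hβ.ne']
    linarith
  have hmaps := (mapsTo_step_trappingRegion hφ hψ hφnn hψnn hβ.le hx.le hxφψ).iterate
  refine ⟨fun n ↦ ((step φ ψ α)^[n] q₀).1, fun n ↦ ((step φ ψ α)^[n] q₀).2,
    div_pos hx hβ, div_pos hx hβ, fun t ↦ ?_, fun t ↦ ?_,
    not_tendsto_zero_of_forall_mem_trappingRegion hx fun n ↦ hmaps n hq₀⟩ <;>
  simp only [Function.iterate_succ_apply', step]

lemma lt_mul_of_lt_ratio {s : ℝ} (hα : 0 < α) (hx : 0 < x) (hs : 0 ≤ s) (h : α < s / (s + x)) :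
    x < (1/α - 1) * s := by
  rw [lt_div_iff₀ (by linarith)] at h
  rw [sub_mul, one_div_mul_eq_div, lt_sub_iff_add_lt, lt_div_iff₀ hα]
  linarith

end StateEvolution

open StateEvolution in
theorem stmt0_general (φ ψ : ℝ → ℝ) (α : ℝ)
    (hφnn : ∀ x ∈ Set.Ici (0:ℝ), 0 ≤ φ x)
    (hψnn : ∀ x ∈ Set.Ici (0:ℝ), 0 ≤ ψ x)
    (hφm : StrictMonoOn φ (Set.Ici 0)) (hψm : StrictMonoOn ψ (Set.Ici 0))
    (hα : α ∈ Set.Ioc (0:ℝ) 1)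
    (hconv : ∀ τS τL : ℕ → ℝ, 0 < τS 0 → 0 < τL 0 →
      (∀ t, τS (t+1) = φ ((1/α - 1) * τS t + (1/α) * τL t)) →
      (∀ t, τL (t+1) = ψ ((1/α - 1) * τL t + (1/α) * τS t)) →
      Filter.Tendsto τS Filter.atTop (nhds 0) ∧ Filter.Tendsto τL Filter.atTop (nhds 0)) :
    sSup {y : ℝ | ∃ x > 0, y = (φ x + ψ x) / (φ x + ψ x + x)} ≤ α := by
  refine Real.sSup_le ?_ hα.1.le
  rintro _ ⟨x, hx, rfl⟩
  by_contra! hlt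
  have hs : 0 ≤ φ x + ψ x := add_nonneg (hφnn x (mem_Ici.2 hx.le)) (hψnn x (mem_Ici.2 hx.le))
  have hxφψ := lt_mul_of_lt_ratio hα.1 hx hs hlt
  have hβ : 0 < 1/α - 1 := pos_of_mul_pos_left (hx.trans hxφψ) hs
  obtain ⟨τS, τL, hS₀, hL₀, hS, hL, hdiv⟩ := exists_orbit_not_tendsto_zero
    hφm.monotoneOn hψm.monotoneOn hφnn hψnn hβ hx hxφψ.le
  exact hdiv (hconv τS τL hS₀ hL₀ hS hL)

/-- Necessary condition for global convergence of state evolution (Lemma 7).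
If, for every positive initialization, the noiseless state-evolution sequences
converge to zero, then `α ≥ α_nec := sup_{x>0} (φ(x)+ψ(x))/(φ(x)+ψ(x)+x)`. -/
theorem stmt0 (φ ψ : ℝ → ℝ) (α : ℝ)
    (hφnn : ∀ x ∈ Set.Ici (0:ℝ), 0 ≤ φ x)
    (hψnn : ∀ x ∈ Set.Ici (0:ℝ), 0 ≤ ψ x)
    (hφ0 : φ 0 = 0) (hψ0 : ψ 0 = 0)
    (hφc : ContinuousOn φ (Set.Ici 0)) (hψc : ContinuousOn ψ (Set.Ici 0))
    (hφm : StrictMonoOn φ (Set.Ici 0)) (hψm : StrictMonoOn ψ (Set.Ici 0))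
    (hφd : DifferentiableOn ℝ φ (Set.Ici 0)) (hψd : DifferentiableOn ℝ ψ (Set.Ici 0))
    (hφd' : ContinuousOn (deriv φ) (Set.Ici 0)) (hψd' : ContinuousOn (deriv ψ) (Set.Ici 0))
    (hα : α ∈ Set.Ioc (0:ℝ) 1)
    (hconv : ∀ τS τL : ℕ → ℝ, 0 < τS 0 → 0 < τL 0 →
      (∀ t, τS (t+1) = φ ((1/α - 1) * τS t + (1/α) * τL t)) →
      (∀ t, τL (t+1) = ψ ((1/α - 1) * τL t + (1/α) * τS t)) →
      Filter.Tendsto τS Filter.atTop (nhds 0) ∧ Filter.Tendsto τL Filter.atTop (nhds 0)) :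
    sSup {y : ℝ | ∃ x > 0, y = (φ x + ψ x) / (φ x + ψ x + x)} ≤ α :=
  stmt0_general φ ψ α hφnn hψnn hφm hψm hα hconv
end

section
/- Lemma 8(i) (unique globally attractive fixed point of the one-variable SE map): Let φ : [0,∞) → [0,∞) be continuous, strictly monotonically increasing and continuously differentiable with φ(0) = 0, and let α ∈ (0,1) satisfy α > sup_{x>0} φ′(x)/(φ′(x)+1). Then for every fixed τ_L > 0, the equation φ((1/α − 1)·τ_S + (1/α)·τ_L) = τ_S has a unique solution τ_S* in (0,∞); this solution satisfies τ_S* < sup_{x≥0} φ(x), and moreover for every τ_S ∈ (0, τ_S*) one has τ_S < φ((1/α − 1)·τ_S + (1/α)·τ_L) < τ_S*, while for every τ_S > τ_S* one has τ_S* < φ((1/α − 1)·τ_S + (1/α)·τ_L) < τ_S. -/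
/-!
Write `g τ = φ(cτ + d)` with `c = 1/α - 1` and `d = τ_L/α`. Since `t ↦ t/(t+1)` is increasing,
`sup φ'/(φ'+1) = S < α` bounds `φ'` by `S/(1-S)`, so `g` has slope at most
`L = c·S/(1-S) < 1` by the mean value theorem. Hence `τ ↦ g τ - τ` is strictly decreasing with
slope at most `-(1-L)`; it is positive at `0` since `g 0 = φ d > φ 0 = 0`, so it has exactly one
zero `τ*`. Its sign on either side of `τ*`, together with the monotonicity of `g`, gives the
attractiveness inequalities.
-/

open Set

section OneSidedLipschitz

variable {g : ℝ → ℝ} {L : ℝ}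

lemma strictAntiOn_sub_id_of_sub_le (hL : L < 1)
    (hg : ∀ a ∈ Ici (0 : ℝ), ∀ b, a ≤ b → g b - g a ≤ L * (b - a)) :
    StrictAntiOn (fun τ => g τ - τ) (Ici 0) := by
  intro a ha b _ hab
  have := hg a ha b hab.le
  dsimp only
  nlinarith

lemma exists_pos_fixedPoint_of_sub_le (hL : L < 1) (hcont : ContinuousOn g (Ici 0))
    (hg : ∀ a ∈ Ici (0 : ℝ), ∀ b, a ≤ b → g b - g a ≤ L * (b - a)) (hg0 : 0 < g 0) :
    ∃ τ, 0 < τ ∧ g τ = τ := by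
  set T := g 0 / (1 - L) + 1 with hT
  have hT0 : 0 < T := by positivity [sub_pos.2 hL]
  have hgT : g T - T < 0 := by
    have hstep := hg 0 self_mem_Ici T hT0.le
    have hT' : (1 - L) * T = g 0 + (1 - L) := by
      rw [hT]; field_simp [(sub_pos.2 hL).ne']
    nlinarith
  have hcontT : ContinuousOn (fun τ => g τ - τ) (Icc 0 T) :=
    (hcont.sub continuousOn_id).mono Icc_subset_Ici_self
  obtain ⟨τ, ⟨hτ0, -⟩, hτ⟩ :=
    intermediate_value_Ioo' hT0.le hcontT (show (0 : ℝ) ∈ Ioo (g T - T) (g 0 - 0) by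
      constructor <;> linarith)
  exact ⟨τ, hτ0, sub_eq_zero.1 hτ⟩

theorem exists_unique_attracting_fixedPoint (hL : L < 1) (hcont : ContinuousOn g (Ici 0))
    (hmono : StrictMonoOn g (Ici 0))
    (hg : ∀ a ∈ Ici (0 : ℝ), ∀ b, a ≤ b → g b - g a ≤ L * (b - a)) (hg0 : 0 < g 0) :
    ∃ τs, 0 < τs ∧ g τs = τs ∧ (∀ τ, 0 < τ → g τ = τ → τ = τs) ∧
      (∀ τ, 0 < τ → τ < τs → τ < g τ ∧ g τ < τs) ∧
      (∀ τ, τs < τ → τs < g τ ∧ g τ < τ) := by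
  obtain ⟨τs, hτs0, hfix⟩ := exists_pos_fixedPoint_of_sub_le hL hcont hg hg0
  have hanti := strictAntiOn_sub_id_of_sub_le hL hg
  have hτs : τs ∈ Ici (0 : ℝ) := hτs0.le
  refine ⟨τs, hτs0, hfix, fun τ hτ0 hτ => ?_, fun τ hτ0 hlt => ?_, fun τ hlt => ?_⟩
  · exact hanti.injOn (show τ ∈ Ici (0 : ℝ) from hτ0.le) hτs (by simp only [hτ, hfix, sub_self])
  · have h₁ := hanti (a := τ) hτ0.le hτs hlt
    have h₂ := hmono (a := τ) hτ0.le hτs hlt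
    simp only [hfix, sub_self] at h₁
    exact ⟨by linarith, hfix ▸ h₂⟩
  · have hτ : τ ∈ Ici (0 : ℝ) := (hτs0.trans hlt).le
    have h₁ := hanti hτs hτ hlt
    have h₂ := hmono hτs hτ hlt
    simp only [hfix, sub_self] at h₁
    exact ⟨hfix ▸ h₂, by linarith⟩

end OneSidedLipschitz

lemma deriv_nonneg_of_monotoneOn_Ici {φ : ℝ → ℝ} (hφ : MonotoneOn φ (Ici 0)) {x : ℝ}
    (hx : 0 < x) : 0 ≤ deriv φ x :=
  derivWithin_of_mem_nhds (f := φ) (Ici_mem_nhds hx) ▸ hφ.derivWithin_nonneg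

lemma deriv_div_deriv_add_one_le_sSup {φ : ℝ → ℝ} (hφ : MonotoneOn φ (Ici 0)) {x : ℝ}
    (hx : 0 < x) :
    deriv φ x / (deriv φ x + 1) ≤ sSup {y : ℝ | ∃ x > 0, y = deriv φ x / (deriv φ x + 1)} := by
  refine le_csSup ⟨1, ?_⟩ ⟨x, hx, rfl⟩
  rintro _ ⟨y, hy, rfl⟩
  have := deriv_nonneg_of_monotoneOn_Ici hφ hy
  exact div_le_one_of_le₀ (by linarith) (by linarith)

lemma le_div_one_sub_of_div_add_one_le {t S : ℝ} (ht : 0 ≤ t) (hS : S < 1)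
    (h : t / (t + 1) ≤ S) : t ≤ S / (1 - S) := by
  rw [div_le_iff₀ (by linarith)] at h
  rw [le_div_iff₀ (by linarith)]
  linarith

lemma one_div_sub_one_mul_div_one_sub_lt_one {S α : ℝ} (hα0 : 0 < α) (hSα : S < α)
    (hα1 : α < 1) : (1 / α - 1) * (S / (1 - S)) < 1 := by
  have hc : 1 / α - 1 = (1 - α) / α := by field_simp
  rw [hc, div_mul_div_comm, div_lt_one (mul_pos hα0 (by linarith))]
  nlinarith

lemma sub_le_mul_of_deriv_le {φ : ℝ → ℝ} {K : ℝ} (hφd : DifferentiableOn ℝ φ (Ici 0))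
    (hK : ∀ x, 0 < x → deriv φ x ≤ K) {x y : ℝ} (hx : 0 ≤ x) (hxy : x ≤ y) :
    φ y - φ x ≤ K * (y - x) :=
  (convex_Ici 0).image_sub_le_mul_sub_of_deriv_le hφd.continuousOn
    (hφd.mono interior_subset) (fun z hz => hK z (by simpa using hz)) x hx y (hx.trans hxy) hxy

lemma coe_lt_iSup_Ici_of_strictMonoOn {φ : ℝ → ℝ} (hφ : StrictMonoOn φ (Ici 0)) {x : ℝ}
    (hx : 0 ≤ x) : (φ x : EReal) < ⨆ y : Ici (0 : ℝ), (φ y.1 : EReal) := by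
  have hx1 : x + 1 ∈ Ici (0 : ℝ) := by simp only [mem_Ici]; linarith
  calc (φ x : EReal) < φ (x + 1) := EReal.coe_lt_coe_iff.2 (hφ hx hx1 (by linarith))
    _ ≤ ⨆ y : Ici (0 : ℝ), (φ y.1 : EReal) :=
      le_iSup (fun y : Ici (0 : ℝ) => (φ y.1 : EReal)) ⟨_, hx1⟩

theorem stmt4_general (φ : ℝ → ℝ) (α τL : ℝ)
    (hφ0 : φ 0 = 0)
    (hφm : StrictMonoOn φ (Set.Ici 0))
    (hφd : DifferentiableOn ℝ φ (Set.Ici 0))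
    (hα : α ∈ Set.Ioo (0:ℝ) 1)
    (hα1 : sSup {y : ℝ | ∃ x > 0, y = deriv φ x / (deriv φ x + 1)} < α)
    (hτL : 0 < τL) :
    ∃ τSstar : ℝ, 0 < τSstar ∧
      φ ((1/α - 1) * τSstar + (1/α) * τL) = τSstar ∧
      (∀ τ : ℝ, 0 < τ → φ ((1/α - 1) * τ + (1/α) * τL) = τ → τ = τSstar) ∧
      ((τSstar : EReal) < ⨆ x : Set.Ici (0:ℝ), (φ x.1 : EReal)) ∧
      (∀ τ : ℝ, 0 < τ → τ < τSstar →
        τ < φ ((1/α - 1) * τ + (1/α) * τL) ∧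
        φ ((1/α - 1) * τ + (1/α) * τL) < τSstar) ∧
      (∀ τ : ℝ, τSstar < τ →
        τSstar < φ ((1/α - 1) * τ + (1/α) * τL) ∧
        φ ((1/α - 1) * τ + (1/α) * τL) < τ) := by
  obtain ⟨hα0, hα1'⟩ := hα
  set S := sSup {y : ℝ | ∃ x > 0, y = deriv φ x / (deriv φ x + 1)}
  set c := 1 / α - 1 with hc
  set d := 1 / α * τL
  have hc0 : 0 < c := by rw [hc, sub_pos, lt_div_iff₀ hα0]; linarith
  have hd0 : 0 < d := by positivity
  have hmaps : ∀ τ ∈ Ici (0 : ℝ), c * τ + d ∈ Ici (0 : ℝ) := fun τ hτ => by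
    simp only [mem_Ici] at hτ ⊢; nlinarith
  have hφ' : ∀ x, 0 < x → deriv φ x ≤ S / (1 - S) := fun x hx =>
    le_div_one_sub_of_div_add_one_le (deriv_nonneg_of_monotoneOn_Ici hφm.monotoneOn hx)
      (by linarith) (deriv_div_deriv_add_one_le_sSup hφm.monotoneOn hx)
  have hslope : ∀ a ∈ Ici (0 : ℝ), ∀ b, a ≤ b →
      φ (c * b + d) - φ (c * a + d) ≤ c * (S / (1 - S)) * (b - a) := fun a ha b hab => by
    have := sub_le_mul_of_deriv_le hφd hφ' (hmaps a ha)
      (add_le_add_left (mul_le_mul_of_nonneg_left hab hc0.le) d)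
    linarith
  obtain ⟨τs, hτs0, hfix, huniq, hbelow, habove⟩ :=
    exists_unique_attracting_fixedPoint (g := fun τ => φ (c * τ + d))
      (one_div_sub_one_mul_div_one_sub_lt_one hα0 hα1 hα1')
      (hφd.continuousOn.comp (by fun_prop) hmaps)
      (hφm.comp (fun a _ b _ hab => by nlinarith) hmaps) hslope
      (by simpa [hφ0] using hφm self_mem_Ici hd0.le hd0)
  refine ⟨τs, hτs0, hfix, huniq, ?_, hbelow, habove⟩
  exact hfix ▸ coe_lt_iSup_Ici_of_strictMonoOn hφm (hmaps τs hτs0.le)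

/-- Lemma 8(i): unique globally attractive fixed point of the one-variable SE map
`τ_S ↦ φ((1/α − 1)·τ_S + (1/α)·τ_L)` when `α > sup_{x>0} φ′(x)/(φ′(x)+1)`. -/
theorem stmt4 (φ : ℝ → ℝ) (α τL : ℝ)
    (hφnn : ∀ x ∈ Set.Ici (0:ℝ), 0 ≤ φ x)
    (hφ0 : φ 0 = 0)
    (hφc : ContinuousOn φ (Set.Ici 0))
    (hφm : StrictMonoOn φ (Set.Ici 0))
    (hφd : DifferentiableOn ℝ φ (Set.Ici 0))
    (hφd' : ContinuousOn (deriv φ) (Set.Ici 0))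
    (hα : α ∈ Set.Ioo (0:ℝ) 1)
    (hα1 : sSup {y : ℝ | ∃ x > 0, y = deriv φ x / (deriv φ x + 1)} < α)
    (hτL : 0 < τL) :
    ∃ τSstar : ℝ, 0 < τSstar ∧
      φ ((1/α - 1) * τSstar + (1/α) * τL) = τSstar ∧
      (∀ τ : ℝ, 0 < τ → φ ((1/α - 1) * τ + (1/α) * τL) = τ → τ = τSstar) ∧
      ((τSstar : EReal) < ⨆ x : Set.Ici (0:ℝ), (φ x.1 : EReal)) ∧
      (∀ τ : ℝ, 0 < τ → τ < τSstar →
        τ < φ ((1/α - 1) * τ + (1/α) * τL) ∧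
        φ ((1/α - 1) * τ + (1/α) * τL) < τSstar) ∧
      (∀ τ : ℝ, τSstar < τ →
        τSstar < φ ((1/α - 1) * τ + (1/α) * τL) ∧
        φ ((1/α - 1) * τ + (1/α) * τL) < τ) :=
  stmt4_general φ α τL hφ0 hφm hφd hα hα1 hτL
end

section
/- Lemma 8(iii) (monotonicity of the fixed-point function): Let φ : [0,∞) → [0,∞) be continuous, strictly monotonically increasing and continuously differentiable with φ(0) = 0, and let α ∈ (0,1) satisfy α > sup_{x>0} φ′(x)/(φ′(x)+1). For τ_L > 0 let Ψ₁(τ_L) denote the unique positive solution τ_S of φ((1/α − 1)·τ_S + (1/α)·τ_L) = τ_S, and set Ψ₁(0) := 0. Then Ψ₁ is strictly monotonically increasing on [0,∞). -/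
/-!
Put `c = 1/α − 1 > 0`. The condition on `α` says exactly that `φ′(x)·c < 1` for `x > 0`, so
for fixed `y > 0` the map `τ ↦ φ(c τ + y/α) − τ` is strictly decreasing on `[0, ∞)`, and `Ψ₁ y`
is its zero. For `0 < a < b`, strict monotonicity of `φ` makes the map for `a` negative at
`Ψ₁ b`, which forces `Ψ₁ a < Ψ₁ b`.
-/

open Set Function

theorem StrictAntiOn.lt_of_isFixedPt_of_lt {α : Type*} [AddCommGroup α] [LinearOrder α]
    [IsOrderedAddMonoid α] {g h : α → α} {s : Set α} {p q : α}
    (hg : StrictAntiOn (fun τ => g τ - τ) s) (hp : p ∈ s) (hq : q ∈ s)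
    (hgp : IsFixedPt g p) (hhq : IsFixedPt h q) (hgh : g q < h q) : p < q := by
  by_contra! hqp
  have hneg : g q - q < 0 := sub_neg.mpr (hgh.trans_eq hhq.eq)
  have hzero : g p - p = 0 := sub_eq_zero.mpr hgp.eq
  have hmono : g p - p ≤ g q - q := hg.antitoneOn hq hp hqp
  exact hneg.not_ge (hzero ▸ hmono)

theorem mul_one_div_sub_one_lt_one {d α : ℝ} (hd : 0 ≤ d) (hα : 0 < α)
    (h : d / (d + 1) < α) : d * (1 / α - 1) < 1 := by
  rw [div_lt_iff₀ (by positivity)] at h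
  rw [mul_sub, mul_one, mul_one_div, sub_lt_iff_lt_add, div_lt_iff₀ hα]
  linarith

theorem deriv_mul_one_div_sub_one_lt_one {φ : ℝ → ℝ} {α x : ℝ}
    (hφ' : ∀ x > 0, 0 ≤ deriv φ x) (hα : 0 < α)
    (hsup : sSup {y : ℝ | ∃ x > 0, y = deriv φ x / (deriv φ x + 1)} < α) (hx : 0 < x) :
    deriv φ x * (1 / α - 1) < 1 := by
  have hbdd : BddAbove {y : ℝ | ∃ x > 0, y = deriv φ x / (deriv φ x + 1)} := by
    refine ⟨1, ?_⟩
    rintro _ ⟨z, hz, rfl⟩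
    exact div_le_one_of_le₀ (by linarith) (by linarith [hφ' z hz])
  exact mul_one_div_sub_one_lt_one (hφ' x hx) hα
    ((le_csSup hbdd ⟨x, hx, rfl⟩).trans_lt hsup)

theorem strictAntiOn_comp_affine_sub_id {φ : ℝ → ℝ} {c s : ℝ} (hc : 0 ≤ c) (hs : 0 < s)
    (hφ : DifferentiableOn ℝ φ (Ici 0)) (hφ' : ∀ x > 0, deriv φ x * c < 1) :
    StrictAntiOn (fun τ => φ (c * τ + s) - τ) (Ici 0) := by
  have harg : ∀ τ ∈ Ici (0 : ℝ), 0 < c * τ + s := fun τ hτ => by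
    have : 0 ≤ c * τ := mul_nonneg hc hτ
    linarith
  apply strictAntiOn_of_deriv_neg (convex_Ici 0)
  · exact (hφ.continuousOn.comp (by fun_prop) fun τ hτ => (harg τ hτ).le).sub continuousOn_id
  · intro τ hτ
    rw [interior_Ici] at hτ
    have hpos := harg τ (mem_Ici.mpr hτ.le)
    have hderiv : HasDerivAt (fun τ => φ (c * τ + s) - τ) (deriv φ (c * τ + s) * c - 1) τ := by
      have hφat := (hφ.differentiableAt (Ici_mem_nhds hpos)).hasDerivAt
      have hlin : HasDerivAt (fun τ : ℝ => c * τ + s) c τ := by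
        simpa using ((hasDerivAt_id τ).const_mul c).add_const s
      exact (hφat.comp τ hlin).sub (hasDerivAt_id τ)
    rw [hderiv.deriv, sub_neg]
    exact hφ' _ hpos

theorem stmt5_general (φ : ℝ → ℝ) (α : ℝ) (Ψ₁ : ℝ → ℝ)
    (hφm : StrictMonoOn φ (Set.Ici 0))
    (hφd : DifferentiableOn ℝ φ (Set.Ici 0))
    (hα : α ∈ Set.Ioo (0:ℝ) 1)
    (hα1 : sSup {y : ℝ | ∃ x > 0, y = deriv φ x / (deriv φ x + 1)} < α)
    (hΨ0 : Ψ₁ 0 = 0)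
    (hΨ : ∀ y : ℝ, 0 < y →
      0 < Ψ₁ y ∧ φ ((1/α - 1) * Ψ₁ y + (1/α) * y) = Ψ₁ y) :
    StrictMonoOn Ψ₁ (Set.Ici 0) := by
  obtain ⟨hα0, hα_lt_one⟩ := hα
  have hc : 0 ≤ 1 / α - 1 := by rw [sub_nonneg, le_div_iff₀ hα0, one_mul]; exact hα_lt_one.le
  have hφ' : ∀ x > 0, 0 ≤ deriv φ x := fun x hx =>
    hφm.monotoneOn.derivWithin_nonneg.trans_eq (derivWithin_of_mem_nhds (Ici_mem_nhds hx))
  intro a ha b _ hab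
  obtain rfl | ha := (mem_Ici.mp ha).eq_or_lt
  · rw [hΨ0]; exact (hΨ b hab).1
  obtain ⟨hΨa, hfixa⟩ := hΨ a ha
  obtain ⟨hΨb, hfixb⟩ := hΨ b (ha.trans hab)
  have harg : 0 ≤ (1 / α - 1) * Ψ₁ b + 1 / α * a := by positivity
  have hlt : φ ((1 / α - 1) * Ψ₁ b + 1 / α * a) < φ ((1 / α - 1) * Ψ₁ b + 1 / α * b) :=
    hφm harg (harg.trans (by gcongr)) (by gcongr)
  exact (strictAntiOn_comp_affine_sub_id hc (by positivity) hφd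
    fun _ hx => deriv_mul_one_div_sub_one_lt_one hφ' hα0 hα1 hx).lt_of_isFixedPt_of_lt
    (h := fun τ => φ ((1 / α - 1) * τ + 1 / α * b)) hΨa.le hΨb.le hfixa hfixb hlt

/-- Lemma 8(iii): the fixed-point function `Ψ₁` (with `Ψ₁(0) = 0` and, for `y > 0`,
`Ψ₁(y)` the unique positive fixed point of `τ ↦ φ((1/α − 1)·τ + (1/α)·y)`)
is strictly monotonically increasing on `[0,∞)`. -/
theorem stmt5 (φ : ℝ → ℝ) (α : ℝ) (Ψ₁ : ℝ → ℝ)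
    (hφnn : ∀ x ∈ Set.Ici (0:ℝ), 0 ≤ φ x)
    (hφ0 : φ 0 = 0)
    (hφc : ContinuousOn φ (Set.Ici 0))
    (hφm : StrictMonoOn φ (Set.Ici 0))
    (hφd : DifferentiableOn ℝ φ (Set.Ici 0))
    (hφd' : ContinuousOn (deriv φ) (Set.Ici 0))
    (hα : α ∈ Set.Ioo (0:ℝ) 1)
    (hα1 : sSup {y : ℝ | ∃ x > 0, y = deriv φ x / (deriv φ x + 1)} < α)
    (hΨ0 : Ψ₁ 0 = 0)
    (hΨ : ∀ y : ℝ, 0 < y →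
      0 < Ψ₁ y ∧ φ ((1/α - 1) * Ψ₁ y + (1/α) * y) = Ψ₁ y) :
    StrictMonoOn Ψ₁ (Set.Ici 0) :=
  stmt5_general φ α Ψ₁ hφm hφd hα hα1 hΨ0 hΨ
end

section
/- Lemma 9 (monotone convergence from the contraction region): Suppose φ and ψ satisfy Assumption A and let α ∈ (0,1]. Suppose the initialization satisfies φ((1/α − 1)·τ_S^{(0)} + (1/α)·τ_L^{(0)}) ≤ τ_S^{(0)} and ψ((1/α − 1)·τ_L^{(0)} + (1/α)·τ_S^{(0)}) ≤ τ_L^{(0)}. Then the SE sequences (τ_S^{(t)})_{t≥0} and (τ_L^{(t)})_{t≥0} are nonincreasing and converge to limits (τ_S*, τ_L*) that solve the fixed-point system τ_S* = φ((1/α − 1)·τ_S* + (1/α)·τ_L*), τ_L* = ψ((1/α − 1)·τ_L* + (1/α)·τ_S*). In particular, if (0,0) is the only solution of this system in [0,∞)², then lim_{t→∞} τ_S^{(t)} = 0 and lim_{t→∞} τ_L^{(t)} = 0. -/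
/-- Lemma 9: monotone convergence of the SE sequences from the contraction region;
the limits form a fixed point of the SE system, and if `(0,0)` is the only
nonnegative fixed point then both sequences converge to zero. -/
theorem stmt8 (φ ψ : ℝ → ℝ) (α : ℝ) (τS τL : ℕ → ℝ)
    (hφnn : ∀ x ∈ Set.Ici (0:ℝ), 0 ≤ φ x)
    (hψnn : ∀ x ∈ Set.Ici (0:ℝ), 0 ≤ ψ x)
    (hφ0 : φ 0 = 0) (hψ0 : ψ 0 = 0)
    (hφc : ContinuousOn φ (Set.Ici 0)) (hψc : ContinuousOn ψ (Set.Ici 0))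
    (hφm : StrictMonoOn φ (Set.Ici 0)) (hψm : StrictMonoOn ψ (Set.Ici 0))
    (hφd : DifferentiableOn ℝ φ (Set.Ici 0)) (hψd : DifferentiableOn ℝ ψ (Set.Ici 0))
    (hφd' : ContinuousOn (deriv φ) (Set.Ici 0)) (hψd' : ContinuousOn (deriv ψ) (Set.Ici 0))
    (hα : α ∈ Set.Ioc (0:ℝ) 1)
    (hS0 : 0 ≤ τS 0) (hL0 : 0 ≤ τL 0)
    (hS : ∀ t, τS (t+1) = φ ((1/α - 1) * τS t + (1/α) * τL t))
    (hL : ∀ t, τL (t+1) = ψ ((1/α - 1) * τL t + (1/α) * τS t))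
    (hinit1 : φ ((1/α - 1) * τS 0 + (1/α) * τL 0) ≤ τS 0)
    (hinit2 : ψ ((1/α - 1) * τL 0 + (1/α) * τS 0) ≤ τL 0) :
    (∀ t, τS (t+1) ≤ τS t) ∧ (∀ t, τL (t+1) ≤ τL t) ∧
    (∃ τSstar τLstar : ℝ,
      Filter.Tendsto τS Filter.atTop (nhds τSstar) ∧
      Filter.Tendsto τL Filter.atTop (nhds τLstar) ∧
      τSstar = φ ((1/α - 1) * τSstar + (1/α) * τLstar) ∧
      τLstar = ψ ((1/α - 1) * τLstar + (1/α) * τSstar)) ∧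
    ((∀ a b : ℝ, 0 ≤ a → 0 ≤ b →
        a = φ ((1/α - 1) * a + (1/α) * b) →
        b = ψ ((1/α - 1) * b + (1/α) * a) →
        a = 0 ∧ b = 0) →
      Filter.Tendsto τS Filter.atTop (nhds 0) ∧
      Filter.Tendsto τL Filter.atTop (nhds 0)) := by
  obtain ⟨hα0, hα1⟩ := hα
  have hd : (0:ℝ) < 1/α := by positivity
  have hc : (0:ℝ) ≤ 1/α - 1 := by
    have : (1:ℝ) ≤ 1/α := one_le_one_div hα0 hα1
    linarith
  have harg : ∀ x y : ℝ, 0 ≤ x → 0 ≤ y → 0 ≤ (1/α - 1) * x + (1/α) * y := by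
    intro x y hx hy
    exact add_nonneg (mul_nonneg hc hx) (mul_nonneg hd.le hy)
  -- nonnegativity
  have hnn : ∀ t, 0 ≤ τS t ∧ 0 ≤ τL t := by
    intro t
    induction t with
    | zero => exact ⟨hS0, hL0⟩
    | succ n ih =>
      refine ⟨?_, ?_⟩
      · rw [hS n]; exact hφnn _ (harg _ _ ih.1 ih.2)
      · rw [hL n]; exact hψnn _ (harg _ _ ih.2 ih.1)
  have hSnn : ∀ t, 0 ≤ τS t := fun t => (hnn t).1
  have hLnn : ∀ t, 0 ≤ τL t := fun t => (hnn t).2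
  -- monotonicity
  have hmono : ∀ t, τS (t+1) ≤ τS t ∧ τL (t+1) ≤ τL t := by
    intro t
    induction t with
    | zero => exact ⟨by rw [hS 0]; exact hinit1, by rw [hL 0]; exact hinit2⟩
    | succ n ih =>
      constructor
      · calc τS (n+2) = φ ((1/α - 1) * τS (n+1) + (1/α) * τL (n+1)) := hS (n+1)
          _ ≤ φ ((1/α - 1) * τS n + (1/α) * τL n) :=
            hφm.monotoneOn (harg _ _ (hSnn (n+1)) (hLnn (n+1)))
              (harg _ _ (hSnn n) (hLnn n))
              (add_le_add (mul_le_mul_of_nonneg_left ih.1 hc)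
                (mul_le_mul_of_nonneg_left ih.2 hd.le))
          _ = τS (n+1) := (hS n).symm
      · calc τL (n+2) = ψ ((1/α - 1) * τL (n+1) + (1/α) * τS (n+1)) := hL (n+1)
          _ ≤ ψ ((1/α - 1) * τL n + (1/α) * τS n) :=
            hψm.monotoneOn (harg _ _ (hLnn (n+1)) (hSnn (n+1)))
              (harg _ _ (hLnn n) (hSnn n))
              (add_le_add (mul_le_mul_of_nonneg_left ih.2 hc)
                (mul_le_mul_of_nonneg_left ih.1 hd.le))
          _ = τL (n+1) := (hL n).symm
  have hSanti : Antitone τS := antitone_nat_of_succ_le (fun n => (hmono n).1)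
  have hLanti : Antitone τL := antitone_nat_of_succ_le (fun n => (hmono n).2)
  have hSbdd : BddBelow (Set.range τS) := ⟨0, by rintro x ⟨t, rfl⟩; exact hSnn t⟩
  have hLbdd : BddBelow (Set.range τL) := ⟨0, by rintro x ⟨t, rfl⟩; exact hLnn t⟩
  have hStend : Filter.Tendsto τS Filter.atTop (nhds (⨅ t, τS t)) :=
    tendsto_atTop_ciInf hSanti hSbdd
  have hLtend : Filter.Tendsto τL Filter.atTop (nhds (⨅ t, τL t)) :=
    tendsto_atTop_ciInf hLanti hLbdd
  set S := ⨅ t, τS t with hSdef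
  set L := ⨅ t, τL t with hLdef
  have hSge : 0 ≤ S := ge_of_tendsto hStend (Filter.Eventually.of_forall hSnn)
  have hLge : 0 ≤ L := ge_of_tendsto hLtend (Filter.Eventually.of_forall hLnn)
  -- fixed point
  have hargS : Filter.Tendsto (fun t => (1/α - 1) * τS t + (1/α) * τL t)
      Filter.atTop (nhds ((1/α - 1) * S + (1/α) * L)) :=
    ((hStend.const_mul _).add (hLtend.const_mul _))
  have hargL : Filter.Tendsto (fun t => (1/α - 1) * τL t + (1/α) * τS t)
      Filter.atTop (nhds ((1/α - 1) * L + (1/α) * S)) :=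
    ((hLtend.const_mul _).add (hStend.const_mul _))
  have hargSw : Filter.Tendsto (fun t => (1/α - 1) * τS t + (1/α) * τL t)
      Filter.atTop (nhdsWithin ((1/α - 1) * S + (1/α) * L) (Set.Ici 0)) :=
    tendsto_nhdsWithin_iff.mpr ⟨hargS,
      Filter.Eventually.of_forall (fun t => harg _ _ (hSnn t) (hLnn t))⟩
  have hargLw : Filter.Tendsto (fun t => (1/α - 1) * τL t + (1/α) * τS t)
      Filter.atTop (nhdsWithin ((1/α - 1) * L + (1/α) * S) (Set.Ici 0)) :=
    tendsto_nhdsWithin_iff.mpr ⟨hargL,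
      Filter.Eventually.of_forall (fun t => harg _ _ (hLnn t) (hSnn t))⟩
  have hφtend : Filter.Tendsto (fun t => φ ((1/α - 1) * τS t + (1/α) * τL t))
      Filter.atTop (nhds (φ ((1/α - 1) * S + (1/α) * L))) :=
    (hφc _ (harg _ _ hSge hLge)).tendsto.comp hargSw
  have hψtend : Filter.Tendsto (fun t => ψ ((1/α - 1) * τL t + (1/α) * τS t))
      Filter.atTop (nhds (ψ ((1/α - 1) * L + (1/α) * S))) :=
    (hψc _ (harg _ _ hLge hSge)).tendsto.comp hargLw
  have hSshift : Filter.Tendsto (fun t => τS (t+1)) Filter.atTop (nhds S) :=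
    hStend.comp (Filter.tendsto_add_atTop_nat 1)
  have hLshift : Filter.Tendsto (fun t => τL (t+1)) Filter.atTop (nhds L) :=
    hLtend.comp (Filter.tendsto_add_atTop_nat 1)
  have hSfix : S = φ ((1/α - 1) * S + (1/α) * L) := by
    refine tendsto_nhds_unique hSshift ?_
    refine hφtend.congr ?_
    intro t; exact (hS t).symm
  have hLfix : L = ψ ((1/α - 1) * L + (1/α) * S) := by
    refine tendsto_nhds_unique hLshift ?_
    refine hψtend.congr ?_
    intro t; exact (hL t).symm
  refine ⟨fun t => (hmono t).1, fun t => (hmono t).2,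
    ⟨S, L, hStend, hLtend, hSfix, hLfix⟩, ?_⟩
  intro huniq
  obtain ⟨hS0', hL0'⟩ := huniq S L hSge hLge hSfix hLfix
  exact ⟨hS0' ▸ hStend, hL0' ▸ hLtend⟩
end

section
/- Theorem 2 (sufficient condition for global convergence of state evolution): Suppose φ and ψ satisfy Assumption A, and let α ∈ (0,1) satisfy α > α1 := sup_{x>0} φ′(x)/(φ′(x)+1) and α > α2 := sup_{x>0} ψ′(x)/(ψ′(x)+1), so that the fixed-point functions Ψ₁ and Ψ₂ are well defined. Assume in addition that Ψ₁(Ψ₂(x)) < x for every x ∈ (0, sup_{u≥0} φ(u)) (the condition α > α3). Then for every initialization τ_S^{(0)} ≥ 0 and τ_L^{(0)} ≥ 0, the noiseless SE sequences satisfy lim_{t→∞} τ_S^{(t)} = 0 and lim_{t→∞} τ_L^{(t)} = 0. -/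
open Set Filter

lemma stmt9_deriv_nonneg {f : ℝ → ℝ} (hm : StrictMonoOn f (Set.Ici 0))
    (hd : DifferentiableOn ℝ f (Set.Ici 0)) {x : ℝ} (hx : 0 < x) : 0 ≤ deriv f x := by
  have hdiff : DifferentiableAt ℝ f x := (hd x (le_of_lt hx)).differentiableAt (Ici_mem_nhds hx)
  have h := hdiff.hasDerivAt
  rw [hasDerivAt_iff_tendsto_slope] at h
  have h' : Tendsto (slope f x) (nhdsWithin x (Set.Ioi x)) (nhds (deriv f x)) :=
    h.mono_left (nhdsWithin_mono x (fun y hy => ne_of_gt hy))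
  refine ge_of_tendsto h' ?_
  filter_upwards [self_mem_nhdsWithin] with y hy
  have hxy : x < y := hy
  have h1 : f x ≤ f y := le_of_lt (hm (le_of_lt hx) (le_of_lt (hx.trans hxy)) hxy)
  rw [slope_def_field]
  exact div_nonneg (by linarith) (by linarith)

lemma stmt9_lipschitz {f : ℝ → ℝ} (α : ℝ) (hα : α ∈ Set.Ioo (0:ℝ) 1)
    (hm : StrictMonoOn f (Set.Ici 0)) (hc : ContinuousOn f (Set.Ici 0))
    (hd : DifferentiableOn ℝ f (Set.Ici 0))
    (hs : sSup {y : ℝ | ∃ x > 0, y = deriv f x / (deriv f x + 1)} < α) :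
    ∃ K : ℝ, 0 ≤ K ∧ K * (1/α - 1) < 1 ∧
      ∀ a b : ℝ, 0 ≤ a → a ≤ b → f b - f a ≤ K * (b - a) := by
  obtain ⟨hα0, hα1⟩ := hα
  set c := sSup {y : ℝ | ∃ x > 0, y = deriv f x / (deriv f x + 1)} with hc_def
  have hbdd : BddAbove {y : ℝ | ∃ x > 0, y = deriv f x / (deriv f x + 1)} := by
    refine ⟨1, fun y hy => ?_⟩
    obtain ⟨x, hx, rfl⟩ := hy
    have hnn := stmt9_deriv_nonneg hm hd hx
    rw [div_le_one (by linarith)]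
    linarith
  have hc0 : 0 ≤ c := by
    have hmem : deriv f 1 / (deriv f 1 + 1) ∈ {y : ℝ | ∃ x > 0, y = deriv f x / (deriv f x + 1)} :=
      ⟨1, one_pos, rfl⟩
    have hnn := stmt9_deriv_nonneg hm hd one_pos
    have := le_csSup hbdd hmem
    have h2 : 0 ≤ deriv f 1 / (deriv f 1 + 1) := by positivity
    linarith
  have hcα : c < α := hs
  have hc1 : c < 1 := lt_trans hcα hα1
  refine ⟨c / (1 - c), div_nonneg hc0 (by linarith), ?_, ?_⟩
  · rw [div_mul_eq_mul_div, div_lt_one (by linarith)]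
    have h2 : c / α < 1 := (div_lt_one hα0).mpr hcα
    rw [mul_sub, mul_one, mul_one_div]
    linarith
  · intro a b ha hab
    have hK : ∀ x ∈ interior (Set.Ici (0:ℝ)), deriv f x ≤ c / (1 - c) := by
      intro x hx
      rw [interior_Ici] at hx
      have hx0 : (0:ℝ) < x := hx
      have hnn := stmt9_deriv_nonneg hm hd hx0
      have hmem : deriv f x / (deriv f x + 1) ∈
          {y : ℝ | ∃ x > 0, y = deriv f x / (deriv f x + 1)} := ⟨x, hx0, rfl⟩
      have hle := le_csSup hbdd hmem
      rw [div_le_iff₀ (by linarith)] at hle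
      rw [le_div_iff₀ (by linarith)]
      nlinarith
    exact (convex_Ici 0).image_sub_le_mul_sub_of_deriv_le hc
      (hd.mono interior_subset) hK a ha b (le_trans ha hab) hab

lemma stmt9_comp {f : ℝ → ℝ} {β K : ℝ} (hβ : 0 < β) (hq : K * β < 1)
    (hm : MonotoneOn f (Set.Ici 0)) (hK : 0 ≤ K)
    (hlip : ∀ a b : ℝ, 0 ≤ a → a ≤ b → f b - f a ≤ K * (b - a))
    {u v c d : ℝ} (hu : 0 ≤ u) (hv : 0 ≤ v) (hc : 0 ≤ c) (hd : 0 ≤ d)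
    (hcd : c ≤ d) (hueq : u ≤ f (β * u + c)) (hveq : f (β * v + d) ≤ v) :
    u ≤ v := by
  by_contra hcon
  push_neg at hcon
  have h1 : 0 ≤ β * v + d := by positivity
  have h2 : 0 ≤ β * u + c := by positivity
  rcases le_or_gt (β * u + c) (β * v + d) with h | h
  · have := hm h2 h1 h
    linarith
  · have := hlip (β * v + d) (β * u + c) h1 (le_of_lt h)
    nlinarith

lemma stmt9_super {f : ℝ → ℝ} {β K : ℝ} (hβ : 0 < β) (hq : K * β < 1) (hK : 0 ≤ K)
    (hlip : ∀ a b : ℝ, 0 ≤ a → a ≤ b → f b - f a ≤ K * (b - a))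
    {u v d : ℝ} (hu : 0 ≤ u) (hd : 0 ≤ d) (huv : u ≤ v)
    (hueq : f (β * u + d) = u) : f (β * v + d) ≤ v := by
  have h1 : 0 ≤ β * u + d := by positivity
  have h2 : β * u + d ≤ β * v + d := by nlinarith
  have := hlip (β * u + d) (β * v + d) h1 h2
  nlinarith

set_option maxHeartbeats 2000000 in
/-- Theorem 2: sufficient condition for global convergence of state evolution.
Under Assumption A, `α > α1`, `α > α2`, and `Ψ₁(Ψ₂(x)) < x` for every
`x ∈ (0, sup_{u≥0} φ(u))`, the noiseless SE sequences converge to zero from every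
nonnegative initialization. -/
theorem stmt9 (φ ψ : ℝ → ℝ) (α : ℝ) (Ψ₁ Ψ₂ : ℝ → ℝ)
    (hφnn : ∀ x ∈ Set.Ici (0:ℝ), 0 ≤ φ x)
    (hψnn : ∀ x ∈ Set.Ici (0:ℝ), 0 ≤ ψ x)
    (hφ0 : φ 0 = 0) (hψ0 : ψ 0 = 0)
    (hφc : ContinuousOn φ (Set.Ici 0)) (hψc : ContinuousOn ψ (Set.Ici 0))
    (hφm : StrictMonoOn φ (Set.Ici 0)) (hψm : StrictMonoOn ψ (Set.Ici 0))
    (hφd : DifferentiableOn ℝ φ (Set.Ici 0)) (hψd : DifferentiableOn ℝ ψ (Set.Ici 0))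
    (hφd' : ContinuousOn (deriv φ) (Set.Ici 0)) (hψd' : ContinuousOn (deriv ψ) (Set.Ici 0))
    (hα : α ∈ Set.Ioo (0:ℝ) 1)
    (hα1 : sSup {y : ℝ | ∃ x > 0, y = deriv φ x / (deriv φ x + 1)} < α)
    (hα2 : sSup {y : ℝ | ∃ x > 0, y = deriv ψ x / (deriv ψ x + 1)} < α)
    (hΨ₁0 : Ψ₁ 0 = 0)
    (hΨ₁ : ∀ y : ℝ, 0 < y →
      0 < Ψ₁ y ∧ φ ((1/α - 1) * Ψ₁ y + (1/α) * y) = Ψ₁ y)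
    (hΨ₂0 : Ψ₂ 0 = 0)
    (hΨ₂ : ∀ y : ℝ, 0 < y →
      0 < Ψ₂ y ∧ ψ ((1/α - 1) * Ψ₂ y + (1/α) * y) = Ψ₂ y)
    (hcontr : ∀ x : ℝ, 0 < x →
      ((x : EReal) < ⨆ u : Set.Ici (0:ℝ), (φ u.1 : EReal)) →
      Ψ₁ (Ψ₂ x) < x)
    (τS τL : ℕ → ℝ)
    (hS0 : 0 ≤ τS 0) (hL0 : 0 ≤ τL 0)
    (hS : ∀ t, τS (t+1) = φ ((1/α - 1) * τS t + (1/α) * τL t))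
    (hL : ∀ t, τL (t+1) = ψ ((1/α - 1) * τL t + (1/α) * τS t)) :
    Filter.Tendsto τS Filter.atTop (nhds 0) ∧
    Filter.Tendsto τL Filter.atTop (nhds 0) := by
  obtain ⟨hα0, hα1'⟩ := hα
  obtain ⟨K₁, hK₁0, hq₁, hlip₁⟩ := stmt9_lipschitz α ⟨hα0, hα1'⟩ hφm hφc hφd hα1
  obtain ⟨K₂, hK₂0, hq₂, hlip₂⟩ := stmt9_lipschitz α ⟨hα0, hα1'⟩ hψm hψc hψd hα2
  set β := 1/α - 1 with hβdef
  set γ := 1/α with hγdef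
  have hγpos : 0 < γ := by rw [hγdef]; positivity
  have hβpos : 0 < β := by
    rw [hβdef, hγdef]
    have : 1 < 1/α := by rw [lt_div_iff₀ hα0]; linarith
    linarith
  have hγα : γ * α = 1 := by rw [hγdef]; field_simp
  have hφmono : MonotoneOn φ (Set.Ici 0) := hφm.monotoneOn
  have hψmono : MonotoneOn ψ (Set.Ici 0) := hψm.monotoneOn
  -- nonnegativity of the sequences
  have hτnn : ∀ t, 0 ≤ τS t ∧ 0 ≤ τL t := by
    intro t
    induction t with
    | zero => exact ⟨hS0, hL0⟩
    | succ t ih =>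
      obtain ⟨h1, h2⟩ := ih
      constructor
      · rw [hS t]; exact hφnn _ (Set.mem_Ici.mpr (by positivity))
      · rw [hL t]; exact hψnn _ (Set.mem_Ici.mpr (by positivity))
  -- sup fact in EReal
  have hsup : ∀ z : ℝ, 0 ≤ z →
      ((φ z : ℝ) : EReal) < ⨆ u : Set.Ici (0:ℝ), (φ u.1 : EReal) := by
    intro z hz
    have h1 : ((φ z : ℝ) : EReal) < ((φ (z+1) : ℝ) : EReal) := by
      exact_mod_cast hφm (Set.mem_Ici.mpr hz) (Set.mem_Ici.mpr (by linarith)) (by linarith)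
    exact lt_of_lt_of_le h1
      (le_iSup (fun u : Set.Ici (0:ℝ) => ((φ u.1 : ℝ) : EReal)) ⟨z+1, Set.mem_Ici.mpr (by linarith)⟩)
  -- monotonicity of Ψ₁
  have hΨ₁mono : ∀ y₁ y₂ : ℝ, 0 < y₁ → y₁ ≤ y₂ → Ψ₁ y₁ ≤ Ψ₁ y₂ := by
    intro y₁ y₂ h1 h2
    obtain ⟨hp1, he1⟩ := hΨ₁ y₁ h1
    obtain ⟨hp2, he2⟩ := hΨ₁ y₂ (lt_of_lt_of_le h1 h2)
    exact stmt9_comp hβpos hq₁ hφmono hK₁0 hlip₁ hp1.le hp2.le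
      (mul_nonneg hγpos.le h1.le) (mul_nonneg hγpos.le (h1.trans_le h2).le)
      (by nlinarith) he1.ge he2.le
  -- the dominating initial point
  obtain ⟨S₀, L₀, hS₀pos, hL₀pos, hS₀eq, hτS1, hτL1, hψL₀⟩ :
      ∃ S L : ℝ, 0 < S ∧ 0 < L ∧ φ (β * S + γ * L) = S ∧ τS 1 ≤ S ∧ τL 1 ≤ L ∧
        ψ (β * L + γ * S) ≤ L := by
    set a := β * τS 0 + γ * τL 0 with hadef
    have ha : 0 ≤ a := by
      rw [hadef]
      exact add_nonneg (mul_nonneg hβpos.le hS0) (mul_nonneg hγpos.le hL0)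
    set L₀ := max (max (τL 1) (α * a)) 1 with hL₀def
    have hL₀pos : (0:ℝ) < L₀ := lt_of_lt_of_le one_pos (le_max_right _ _)
    obtain ⟨hS₀pos, hS₀eq⟩ := hΨ₁ L₀ hL₀pos
    refine ⟨Ψ₁ L₀, L₀, hS₀pos, hL₀pos, hS₀eq, ?_, ?_, ?_⟩
    · -- τS 1 ≤ Ψ₁ L₀
      have h1 : τS 1 = φ a := by have := hS 0; rwa [← hadef] at this
      have h2 : a ≤ γ * L₀ := by
        have h3 : α * a ≤ L₀ := le_trans (le_max_right _ _) (le_max_left _ _)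
        nlinarith
      have hgL : 0 ≤ γ * L₀ := mul_nonneg hγpos.le hL₀pos.le
      have hargnn0 : 0 ≤ β * Ψ₁ L₀ + γ * L₀ :=
        add_nonneg (mul_nonneg hβpos.le hS₀pos.le) hgL
      rw [h1]
      calc φ a ≤ φ (γ * L₀) := hφmono (Set.mem_Ici.mpr ha) (Set.mem_Ici.mpr hgL) h2
        _ ≤ φ (β * Ψ₁ L₀ + γ * L₀) := hφmono (Set.mem_Ici.mpr hgL)
              (Set.mem_Ici.mpr hargnn0) (by nlinarith)
        _ = Ψ₁ L₀ := hS₀eq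
    · exact le_trans (le_max_left _ _) (le_max_left _ _)
    · -- ψ (β * L₀ + γ * Ψ₁ L₀) ≤ L₀
      obtain ⟨hL'pos, hL'eq⟩ := hΨ₂ (Ψ₁ L₀) hS₀pos
      have hargnn0 : 0 ≤ β * Ψ₁ L₀ + γ * L₀ :=
        add_nonneg (mul_nonneg hβpos.le hS₀pos.le) (mul_nonneg hγpos.le hL₀pos.le)
      have hL'le : Ψ₂ (Ψ₁ L₀) ≤ L₀ := by
        by_contra hcon
        push_neg at hcon
        have h1 : Ψ₁ L₀ ≤ Ψ₁ (Ψ₂ (Ψ₁ L₀)) := hΨ₁mono L₀ (Ψ₂ (Ψ₁ L₀)) hL₀pos hcon.le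
        have h2 : ((Ψ₁ L₀ : ℝ) : EReal) < ⨆ u : Set.Ici (0:ℝ), (φ u.1 : EReal) := by
          rw [← hS₀eq]; exact hsup _ hargnn0
        have := hcontr (Ψ₁ L₀) hS₀pos h2
        linarith
      exact stmt9_super hβpos hq₂ hK₂0 hlip₂ hL'pos.le
        (mul_nonneg hγpos.le hS₀pos.le) hL'le hL'eq
  -- dominating iterates
  obtain ⟨G, hGdef⟩ : ∃ G : ℝ × ℝ → ℝ × ℝ,
      ∀ p : ℝ × ℝ, G p = (φ (β * p.1 + γ * p.2), ψ (β * p.2 + γ * p.1)) :=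
    ⟨_, fun _ => rfl⟩
  obtain ⟨P, hP0, hPsucc⟩ : ∃ P : ℕ → ℝ × ℝ, P 0 = (S₀, L₀) ∧ ∀ t, P (t+1) = G (P t) :=
    ⟨fun t => G^[t] (S₀, L₀), rfl, fun t => Function.iterate_succ_apply' G t _⟩
  have hPnn : ∀ t, 0 ≤ (P t).1 ∧ 0 ≤ (P t).2 := by
    intro t
    induction t with
    | zero => rw [hP0]; exact ⟨hS₀pos.le, hL₀pos.le⟩
    | succ t ih =>
      obtain ⟨h1, h2⟩ := ih
      rw [hPsucc t, hGdef]
      constructor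
      · exact hφnn _ (Set.mem_Ici.mpr (add_nonneg (mul_nonneg hβpos.le h1)
          (mul_nonneg hγpos.le h2)))
      · exact hψnn _ (Set.mem_Ici.mpr (add_nonneg (mul_nonneg hβpos.le h2)
          (mul_nonneg hγpos.le h1)))
  have hPdec : ∀ t, (P (t+1)).1 ≤ (P t).1 ∧ (P (t+1)).2 ≤ (P t).2 := by
    intro t
    induction t with
    | zero =>
      rw [hPsucc 0, hP0, hGdef]
      exact ⟨le_of_eq hS₀eq, hψL₀⟩
    | succ t ih =>
      obtain ⟨h1, h2⟩ := hPnn t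
      obtain ⟨h1', h2'⟩ := hPnn (t+1)
      obtain ⟨hd1, hd2⟩ := ih
      have e2 : (P (t+1)).1 = φ (β * (P t).1 + γ * (P t).2) := by rw [hPsucc t, hGdef]
      have e3 : (P (t+1)).2 = ψ (β * (P t).2 + γ * (P t).1) := by rw [hPsucc t, hGdef]
      rw [hPsucc (t+1), hGdef]
      constructor
      · show φ (β * (P (t+1)).1 + γ * (P (t+1)).2) ≤ (P (t+1)).1
        calc φ (β * (P (t+1)).1 + γ * (P (t+1)).2)
            ≤ φ (β * (P t).1 + γ * (P t).2) :=
              hφmono (Set.mem_Ici.mpr (add_nonneg (mul_nonneg hβpos.le h1')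
                  (mul_nonneg hγpos.le h2')))
                (Set.mem_Ici.mpr (add_nonneg (mul_nonneg hβpos.le h1)
                  (mul_nonneg hγpos.le h2)))
                (by nlinarith)
          _ = (P (t+1)).1 := e2.symm
      · show ψ (β * (P (t+1)).2 + γ * (P (t+1)).1) ≤ (P (t+1)).2
        calc ψ (β * (P (t+1)).2 + γ * (P (t+1)).1)
            ≤ ψ (β * (P t).2 + γ * (P t).1) :=
              hψmono (Set.mem_Ici.mpr (add_nonneg (mul_nonneg hβpos.le h2')
                  (mul_nonneg hγpos.le h1')))
                (Set.mem_Ici.mpr (add_nonneg (mul_nonneg hβpos.le h2)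
                  (mul_nonneg hγpos.le h1)))
                (by nlinarith)
          _ = (P (t+1)).2 := e3.symm
  have hPdom : ∀ t, τS (t+1) ≤ (P t).1 ∧ τL (t+1) ≤ (P t).2 := by
    intro t
    induction t with
    | zero => rw [hP0]; exact ⟨hτS1, hτL1⟩
    | succ t ih =>
      obtain ⟨hd1, hd2⟩ := ih
      obtain ⟨hnS, hnL⟩ := hτnn (t+1)
      obtain ⟨hp1, hp2⟩ := hPnn t
      rw [hPsucc t, hGdef]
      constructor
      · show τS (t+1+1) ≤ φ (β * (P t).1 + γ * (P t).2)
        rw [hS (t+1)]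
        exact hφmono (Set.mem_Ici.mpr (add_nonneg (mul_nonneg hβpos.le hnS)
            (mul_nonneg hγpos.le hnL)))
          (Set.mem_Ici.mpr (add_nonneg (mul_nonneg hβpos.le hp1)
            (mul_nonneg hγpos.le hp2)))
          (by nlinarith)
      · show τL (t+1+1) ≤ ψ (β * (P t).2 + γ * (P t).1)
        rw [hL (t+1)]
        exact hψmono (Set.mem_Ici.mpr (add_nonneg (mul_nonneg hβpos.le hnL)
            (mul_nonneg hγpos.le hnS)))
          (Set.mem_Ici.mpr (add_nonneg (mul_nonneg hβpos.le hp2)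
            (mul_nonneg hγpos.le hp1)))
          (by nlinarith)
  -- limits of the dominating iterates
  have hmonoS : Antitone (fun t => (P t).1) := antitone_nat_of_succ_le (fun t => (hPdec t).1)
  have hmonoL : Antitone (fun t => (P t).2) := antitone_nat_of_succ_le (fun t => (hPdec t).2)
  have hbddS : BddBelow (Set.range fun t => (P t).1) := by
    refine ⟨0, ?_⟩; rintro x ⟨t, rfl⟩; exact (hPnn t).1
  have hbddL : BddBelow (Set.range fun t => (P t).2) := by
    refine ⟨0, ?_⟩; rintro x ⟨t, rfl⟩; exact (hPnn t).2
  set s := ⨅ t, (P t).1 with hsdef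
  set l := ⨅ t, (P t).2 with hldef
  have htendS : Tendsto (fun t => (P t).1) atTop (nhds s) := tendsto_atTop_ciInf hmonoS hbddS
  have htendL : Tendsto (fun t => (P t).2) atTop (nhds l) := tendsto_atTop_ciInf hmonoL hbddL
  have hsnn : 0 ≤ s := le_ciInf (fun t => (hPnn t).1)
  have hlnn : 0 ≤ l := le_ciInf (fun t => (hPnn t).2)
  -- limit equations
  have hseq : s = φ (β * s + γ * l) := by
    have hargt : Tendsto (fun t => β * (P t).1 + γ * (P t).2) atTop (nhds (β * s + γ * l)) :=
      (htendS.const_mul β).add (htendL.const_mul γ)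
    have hphit : Tendsto (fun t => φ (β * (P t).1 + γ * (P t).2)) atTop
        (nhds (φ (β * s + γ * l))) := by
      refine ((hφc _ (Set.mem_Ici.mpr (by positivity))).tendsto).comp ?_
      exact tendsto_nhdsWithin_of_tendsto_nhds_of_eventually_within _ hargt
        (Filter.Eventually.of_forall (fun t => Set.mem_Ici.mpr
          (by have := (hPnn t).1; have := (hPnn t).2; positivity)))
    have hshift : Tendsto (fun t => (P (t+1)).1) atTop (nhds s) :=
      htendS.comp (tendsto_add_atTop_nat 1)
    have heq : (fun t => (P (t+1)).1) = (fun t => φ (β * (P t).1 + γ * (P t).2)) := by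
      funext t; rw [hPsucc t, hGdef]
    rw [heq] at hshift
    exact tendsto_nhds_unique hshift hphit
  have hleq : l = ψ (β * l + γ * s) := by
    have hargt : Tendsto (fun t => β * (P t).2 + γ * (P t).1) atTop (nhds (β * l + γ * s)) :=
      (htendL.const_mul β).add (htendS.const_mul γ)
    have hphit : Tendsto (fun t => ψ (β * (P t).2 + γ * (P t).1)) atTop
        (nhds (ψ (β * l + γ * s))) := by
      refine ((hψc _ (Set.mem_Ici.mpr (by positivity))).tendsto).comp ?_
      exact tendsto_nhdsWithin_of_tendsto_nhds_of_eventually_within _ hargt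
        (Filter.Eventually.of_forall (fun t => Set.mem_Ici.mpr
          (by have := (hPnn t).1; have := (hPnn t).2; positivity)))
    have hshift : Tendsto (fun t => (P (t+1)).2) atTop (nhds l) :=
      htendL.comp (tendsto_add_atTop_nat 1)
    have heq : (fun t => (P (t+1)).2) = (fun t => ψ (β * (P t).2 + γ * (P t).1)) := by
      funext t; rw [hPsucc t, hGdef]
    rw [heq] at hshift
    exact tendsto_nhds_unique hshift hphit
  -- the limits are zero
  have hs0 : s = 0 := by
    by_contra hne
    have hspos : 0 < s := lt_of_le_of_ne hsnn (Ne.symm hne)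
    rcases eq_or_lt_of_le hlnn with hl0 | hlpos
    · have hveq : φ (β * 0 + γ * l) ≤ 0 := by
        rw [← hl0]
        simp only [mul_zero, add_zero, zero_add]
        rw [hφ0]
      have h2 : s ≤ 0 := stmt9_comp hβpos hq₁ hφmono hK₁0 hlip₁ hsnn le_rfl
        (mul_nonneg hγpos.le hlnn) (mul_nonneg hγpos.le hlnn) le_rfl hseq.le hveq
      linarith
    · obtain ⟨hp1, he1⟩ := hΨ₁ l hlpos
      obtain ⟨hp2, he2⟩ := hΨ₂ s hspos
      have hgl : 0 ≤ γ * l := mul_nonneg hγpos.le hlnn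
      have hgs : 0 ≤ γ * s := mul_nonneg hγpos.le hsnn
      have h1 : s = Ψ₁ l :=
        le_antisymm
          (stmt9_comp hβpos hq₁ hφmono hK₁0 hlip₁ hsnn hp1.le hgl hgl le_rfl hseq.le he1.le)
          (stmt9_comp hβpos hq₁ hφmono hK₁0 hlip₁ hp1.le hsnn hgl hgl le_rfl he1.ge hseq.ge)
      have h2 : l = Ψ₂ s :=
        le_antisymm
          (stmt9_comp hβpos hq₂ hψmono hK₂0 hlip₂ hlnn hp2.le hgs hgs le_rfl hleq.le he2.le)
          (stmt9_comp hβpos hq₂ hψmono hK₂0 hlip₂ hp2.le hlnn hgs hgs le_rfl he2.ge hleq.ge)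
      have h3 : ((s : ℝ) : EReal) < ⨆ u : Set.Ici (0:ℝ), (φ u.1 : EReal) := by
        rw [hseq]
        exact hsup _ (by positivity)
      have h4 := hcontr s hspos h3
      rw [← h2, ← h1] at h4
      exact lt_irrefl _ h4
  have hl0 : l = 0 := by
    refine le_antisymm ?_ hlnn
    have hveq : ψ (β * 0 + γ * s) ≤ 0 := by
      rw [hs0]
      simp only [mul_zero, add_zero, zero_add]
      rw [hψ0]
    exact stmt9_comp hβpos hq₂ hψmono hK₂0 hlip₂ hlnn le_rfl
      (mul_nonneg hγpos.le hsnn) (mul_nonneg hγpos.le hsnn) le_rfl hleq.le hveq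
  -- squeeze
  rw [hs0] at htendS
  rw [hl0] at htendL
  constructor
  · have h1 : Tendsto (fun t => τS (t+1)) atTop (nhds 0) :=
      squeeze_zero (fun t => (hτnn (t+1)).1) (fun t => (hPdom t).1) htendS
    exact (Filter.tendsto_add_atTop_iff_nat 1).mp h1
  · have h1 : Tendsto (fun t => τL (t+1)) atTop (nhds 0) :=
      squeeze_zero (fun t => (hτnn (t+1)).2) (fun t => (hPdom t).2) htendL
    exact (Filter.tendsto_add_atTop_iff_nat 1).mp h1
end

section
/- Lemma 2 (MMSE denoiser, scalar form): Let S and N be square-integrable real random variables on a probability space, with S and N independent, E[N] = 0 and E[N²] = v > 0. Set Y = S + N, let Ŝ = E[S | Y] be the conditional expectation of S given the σ-algebra generated by Y, and let mmse = E[(Ŝ − S)²]. Then: (a) E[(Y − S)·Ŝ] = mmse and E[(Y − S)·Y] = v, so the coefficient a := E[(Y − S)·Ŝ]/E[(Y − S)·Y] equals mmse/v; (b) if 0 < mmse < v, then the extrinsic estimate s_ext := (v/(v − mmse))·(Ŝ − (mmse/v)·Y) satisfies E[(s_ext − S)·(Y − S)] = 0 and E[(s_ext − S)²] = v·mmse/(v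 − mmse). -/
/-!
In `L²(μ)` the conditional expectation given `σ(Y)` is the orthogonal projection onto the
`σ(Y)`-measurable functions, a subspace containing both `Y` and `Ŝ`. Hence the error `Ŝ - S` is
orthogonal to `Ŝ` and to `Y = S + N`, while independence and `E[N] = 0` make `S` orthogonal to
`N`. These three orthogonality relations turn every claimed identity into inner-product algebra
among `S`, `N` and `Ŝ`: for instance `⟪N, Ŝ - S⟫ = ⟪Y, Ŝ - S⟫ - ⟪S, Ŝ - S⟫ = ‖Ŝ - S‖²`.
-/

open MeasureTheory ProbabilityTheory
open scoped InnerProductSpace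

section InnerProductSpace

variable {E : Type*} [NormedAddCommGroup E] [InnerProductSpace ℝ E] {s n t : E}

theorem inner_error_noise_eq_norm_sq (ht : ⟪t - s, t⟫_ℝ = 0) (hy : ⟪t - s, s + n⟫_ℝ = 0) :
    ⟪t - s, n⟫_ℝ = ‖t - s‖ ^ 2 := by
  have hn : n = (s + n) - t + (t - s) := by abel
  rw [hn, inner_add_right, inner_sub_right, hy, ht, real_inner_self_eq_norm_sq]
  ring

theorem inner_noise_estimate_eq_norm_sq (ht : ⟪t - s, t⟫_ℝ = 0) (hy : ⟪t - s, s + n⟫_ℝ = 0)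
    (hsn : ⟪s, n⟫_ℝ = 0) : ⟪n, t⟫_ℝ = ‖t - s‖ ^ 2 := by
  have ht_eq : t = (t - s) + s := by abel
  rw [ht_eq, inner_add_right, real_inner_comm, inner_error_noise_eq_norm_sq ht hy,
    real_inner_comm, hsn, add_zero, ← ht_eq]

theorem inner_noise_observation_eq_norm_sq (hsn : ⟪s, n⟫_ℝ = 0) :
    ⟪n, s + n⟫_ℝ = ‖n‖ ^ 2 := by
  rw [inner_add_right, real_inner_comm, hsn, zero_add, real_inner_self_eq_norm_sq]

noncomputable def extrinsicEstimate (a v : ℝ) (t y : E) : E := (v / (v - a)) • (t - (a / v) • y)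

variable {a v : ℝ}

theorem extrinsicEstimate_sub_eq (hv : v ≠ 0) (hva : v - a ≠ 0) :
    extrinsicEstimate a v t (s + n) - s = (v / (v - a)) • (t - s) - (a / (v - a)) • n := by
  unfold extrinsicEstimate
  match_scalars <;> field_simp
  ring

theorem inner_extrinsicEstimate_sub_noise (ht : ⟪t - s, t⟫_ℝ = 0)
    (hy : ⟪t - s, s + n⟫_ℝ = 0) (ha : ‖t - s‖ ^ 2 = a) (hv : ‖n‖ ^ 2 = v) (hv0 : v ≠ 0)
    (hva : v - a ≠ 0) :
    ⟪extrinsicEstimate a v t (s + n) - s, n⟫_ℝ = 0 := by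
  rw [extrinsicEstimate_sub_eq hv0 hva, inner_sub_left, real_inner_smul_left,
    real_inner_smul_left, inner_error_noise_eq_norm_sq ht hy, ha, real_inner_self_eq_norm_sq, hv]
  field_simp
  ring

theorem norm_extrinsicEstimate_sub_sq (ht : ⟪t - s, t⟫_ℝ = 0) (hy : ⟪t - s, s + n⟫_ℝ = 0)
    (ha : ‖t - s‖ ^ 2 = a) (hv : ‖n‖ ^ 2 = v) (hv0 : v ≠ 0) (hva : v - a ≠ 0) :
    ‖extrinsicEstimate a v t (s + n) - s‖ ^ 2 = v * a / (v - a) := by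
  rw [extrinsicEstimate_sub_eq hv0 hva, norm_sub_sq_real, norm_smul, norm_smul, mul_pow, mul_pow,
    real_inner_smul_left, real_inner_smul_right, inner_error_noise_eq_norm_sq ht hy, ha, hv,
    Real.norm_eq_abs, Real.norm_eq_abs, sq_abs, sq_abs]
  field_simp
  ring

end InnerProductSpace

section L2

variable {Ω : Type*} [MeasurableSpace Ω] {μ : Measure Ω}

theorem integral_mul_eq_inner {f g : Ω → ℝ} {F G : Ω →₂[μ] ℝ} (hF : F =ᵐ[μ] f)
    (hG : G =ᵐ[μ] g) : ∫ ω, f ω * g ω ∂μ = ⟪F, G⟫_ℝ := by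
  rw [L2.inner_def]
  refine integral_congr_ae ?_
  filter_upwards [hF, hG] with ω hFω hGω
  rw [RCLike.inner_apply', conj_trivial, hFω, hGω]

theorem integral_sq_eq_norm_sq {f : Ω → ℝ} {F : Ω →₂[μ] ℝ} (hF : F =ᵐ[μ] f) :
    ∫ ω, f ω ^ 2 ∂μ = ‖F‖ ^ 2 := by
  simp_rw [sq]
  rw [integral_mul_eq_inner hF hF, real_inner_self_eq_norm_mul_norm]

theorem ProbabilityTheory.IndepFun.inner_toLp_eq_zero {X Z : Ω → ℝ} (hXZ : IndepFun X Z μ) (hX : MemLp X 2 μ)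
    (hZ : MemLp Z 2 μ) (hZ0 : ∫ ω, Z ω ∂μ = 0) : ⟪hX.toLp X, hZ.toLp Z⟫_ℝ = 0 := by
  rw [← integral_mul_eq_inner hX.coeFn_toLp hZ.coeFn_toLp]
  exact (hXZ.integral_mul_eq_mul_integral hX.1 hZ.1).trans (by rw [hZ0, mul_zero])

theorem coeFn_extrinsicEstimate {f g : Ω → ℝ} {F G : Ω →₂[μ] ℝ} (hF : F =ᵐ[μ] f)
    (hG : G =ᵐ[μ] g) (a v : ℝ) :
    ⇑(extrinsicEstimate a v F G) =ᵐ[μ] fun ω => v / (v - a) * (f ω - a / v * g ω) := by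
  filter_upwards [Lp.coeFn_smul (v / (v - a)) (F - (a / v) • G), Lp.coeFn_sub F ((a / v) • G),
    Lp.coeFn_smul (a / v) G, hF, hG] with ω h₁ h₂ h₃ hFω hGω
  simp only [extrinsicEstimate, h₁, h₂, h₃, Pi.smul_apply, Pi.sub_apply, smul_eq_mul, hFω, hGω]

end L2

theorem inner_condExpL2_sub_eq_zero {Ω : Type*} {m m₀ : MeasurableSpace Ω} {μ : @Measure Ω m₀}
    (hm : m ≤ m₀) (f : Ω →₂[μ] ℝ) {g : Ω →₂[μ] ℝ} (hg : AEStronglyMeasurable[m] g μ) :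
    ⟪(condExpL2 ℝ ℝ hm f : Ω →₂[μ] ℝ) - f, g⟫_ℝ = 0 := by
  rw [inner_sub_left, inner_condExpL2_eq_inner_fun hm f g hg, sub_self]

theorem stmt11_general {Ω : Type*} [MeasurableSpace Ω] (μ : Measure Ω)
    [IsProbabilityMeasure μ]
    (S N : Ω → ℝ) (v : ℝ)
    (hSmeas : Measurable S) (hNmeas : Measurable N)
    (hS2 : MemLp S 2 μ) (hN2 : MemLp N 2 μ)
    (hindep : IndepFun S N μ)
    (hN0 : ∫ ω, N ω ∂μ = 0)
    (hNv : ∫ ω, (N ω) ^ 2 ∂μ = v)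
    (Y : Ω → ℝ) (hY : Y = fun ω => S ω + N ω)
    (Shat : Ω → ℝ)
    (hShat : Shat = MeasureTheory.condExp (MeasurableSpace.comap Y inferInstance) μ S)
    (mmse : ℝ) (hmmse : mmse = ∫ ω, (Shat ω - S ω) ^ 2 ∂μ) :
    (∫ ω, (Y ω - S ω) * Shat ω ∂μ = mmse) ∧
    (∫ ω, (Y ω - S ω) * Y ω ∂μ = v) ∧
    ((∫ ω, (Y ω - S ω) * Shat ω ∂μ) / (∫ ω, (Y ω - S ω) * Y ω ∂μ) = mmse / v) ∧
    (0 < mmse → mmse < v →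
      ∀ sExt : Ω → ℝ,
        sExt = (fun ω => (v / (v - mmse)) * (Shat ω - (mmse / v) * Y ω)) →
        (∫ ω, (sExt ω - S ω) * (Y ω - S ω) ∂μ = 0) ∧
        (∫ ω, (sExt ω - S ω) ^ 2 ∂μ = v * mmse / (v - mmse))) := by
  have hm : MeasurableSpace.comap Y inferInstance ≤ ‹MeasurableSpace Ω› :=
    hY ▸ (hSmeas.add hNmeas).comap_le
  set s := hS2.toLp S
  set n := hN2.toLp N
  set t : Ω →₂[μ] ℝ := ↑(condExpL2 ℝ ℝ hm s)
  have hs : s =ᵐ[μ] S := hS2.coeFn_toLp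
  have hn : n =ᵐ[μ] N := hN2.coeFn_toLp
  have ht : t =ᵐ[μ] Shat := hShat ▸ hS2.condExpL2_ae_eq_condExp hm
  have hy : ⇑(s + n) =ᵐ[μ] Y := hY ▸ (Lp.coeFn_add s n).trans (hs.add hn)
  have hnoise : ⇑n =ᵐ[μ] fun ω => Y ω - S ω := hn.mono fun ω h => by simp [hY, h]
  have hsn : ⟪s, n⟫_ℝ = 0 := hindep.inner_toLp_eq_zero hS2 hN2 hN0
  have ht_orth : ⟪t - s, t⟫_ℝ = 0 :=
    inner_condExpL2_sub_eq_zero hm s (aestronglyMeasurable_condExpL2 hm s)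
  have hy_orth : ⟪t - s, s + n⟫_ℝ = 0 :=
    inner_condExpL2_sub_eq_zero hm s ((comap_measurable Y).aestronglyMeasurable.congr hy.symm)
  have hmmse_norm : ‖t - s‖ ^ 2 = mmse :=
    hmmse ▸ (integral_sq_eq_norm_sq ((Lp.coeFn_sub t s).trans (ht.sub hs))).symm
  have hv_norm : ‖n‖ ^ 2 = v := hNv ▸ (integral_sq_eq_norm_sq hn).symm
  have h_noise_est : ∫ ω, (Y ω - S ω) * Shat ω ∂μ = mmse := by
    rw [integral_mul_eq_inner hnoise ht, inner_noise_estimate_eq_norm_sq ht_orth hy_orth hsn,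
      hmmse_norm]
  have h_noise_obs : ∫ ω, (Y ω - S ω) * Y ω ∂μ = v := by
    rw [integral_mul_eq_inner hnoise hy, inner_noise_observation_eq_norm_sq hsn, hv_norm]
  refine ⟨h_noise_est, h_noise_obs, by rw [h_noise_est, h_noise_obs], fun hpos hlt sExt hsExt => ?_⟩
  have hext : ⇑(extrinsicEstimate mmse v t (s + n) - s) =ᵐ[μ] fun ω => sExt ω - S ω :=
    hsExt ▸ (Lp.coeFn_sub _ s).trans ((coeFn_extrinsicEstimate ht hy mmse v).sub hs)
  have hv0 : v ≠ 0 := (hpos.trans hlt).ne'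
  have hva : v - mmse ≠ 0 := (sub_pos.2 hlt).ne'
  rw [integral_mul_eq_inner hext hnoise, integral_sq_eq_norm_sq hext]
  exact ⟨inner_extrinsicEstimate_sub_noise ht_orth hy_orth hmmse_norm hv_norm hv0 hva,
    norm_extrinsicEstimate_sub_sq ht_orth hy_orth hmmse_norm hv_norm hv0 hva⟩

/-- Lemma 2 (MMSE denoiser, scalar form): identities for the MMSE denoiser
`Ŝ = E[S | Y]` of `S` from `Y = S + N`, with `S ⟂ N`, `E[N] = 0`, `E[N²] = v > 0`,
and the orthogonality/variance formulas for the extrinsic estimate. -/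
theorem stmt11 {Ω : Type*} [MeasurableSpace Ω] (μ : Measure Ω)
    [IsProbabilityMeasure μ]
    (S N : Ω → ℝ) (v : ℝ)
    (hSmeas : Measurable S) (hNmeas : Measurable N)
    (hS2 : MemLp S 2 μ) (hN2 : MemLp N 2 μ)
    (hindep : IndepFun S N μ)
    (hN0 : ∫ ω, N ω ∂μ = 0)
    (hNv : ∫ ω, (N ω) ^ 2 ∂μ = v) (hv : 0 < v)
    (Y : Ω → ℝ) (hY : Y = fun ω => S ω + N ω)
    (Shat : Ω → ℝ)
    (hShat : Shat = MeasureTheory.condExp (MeasurableSpace.comap Y inferInstance) μ S)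
    (mmse : ℝ) (hmmse : mmse = ∫ ω, (Shat ω - S ω) ^ 2 ∂μ) :
    (∫ ω, (Y ω - S ω) * Shat ω ∂μ = mmse) ∧
    (∫ ω, (Y ω - S ω) * Y ω ∂μ = v) ∧
    ((∫ ω, (Y ω - S ω) * Shat ω ∂μ) / (∫ ω, (Y ω - S ω) * Y ω ∂μ) = mmse / v) ∧
    (0 < mmse → mmse < v →
      ∀ sExt : Ω → ℝ,
        sExt = (fun ω => (v / (v - mmse)) * (Shat ω - (mmse / v) * Y ω)) →
        (∫ ω, (sExt ω - S ω) * (Y ω - S ω) ∂μ = 0) ∧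
        (∫ ω, (sExt ω - S ω) ^ 2 ∂μ = v * mmse / (v - mmse))) :=
  stmt11_general μ S N v hSmeas hNmeas hS2 hN2 hindep hN0 hNv Y hY Shat hShat mmse hmmse
end

section
/- Lemma 11 (continuity and boundedness of the divergence kernels H and G): Let b > 0 and let f : [0,∞) → [0,∞) be monotonically increasing and continuously differentiable with f(0) = 0 and f′(0) = 0, and suppose f is Lipschitz on [0, b] with Lipschitz constant M_b. Then the functions H and G are continuous on [0,b]×[0,b], and for all (x, y) ∈ [0,b]×[0,b] one has |H(x,y)| ≤ (3/2)·M_b and |G(x,y)| ≤ M_b. -/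
/-- The divergence kernel `H(x,y)`: `H(0,0) = 0`,
`H(x,x) = (x·f′(x) + f(x))/(2x)` for `x ≠ 0`, and
`H(x,y) = (x·f(x) − y·f(y))/(x² − y²)` for `x ≠ y`. -/
noncomputable def Hker (f : ℝ → ℝ) (x y : ℝ) : ℝ :=
  if x = y then (if x = 0 then 0 else (x * deriv f x + f x) / (2 * x))
  else (x * f x - y * f y) / (x ^ 2 - y ^ 2)

/-- The divergence kernel `G(x,y)`: `G(0,0) = 0`,
`G(x,x) = (x·f′(x) − f(x))/(2x)` for `x ≠ 0`, and
`G(x,y) = (y·f(x) − x·f(y))/(x² − y²)` for `x ≠ y`. -/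
noncomputable def Gker (f : ℝ → ℝ) (x y : ℝ) : ℝ :=
  if x = y then (if x = 0 then 0 else (x * deriv f x - f x) / (2 * x))
  else (y * f x - x * f y) / (x ^ 2 - y ^ 2)

/-!
Both kernels are built from the divided difference `D(x,y) = dslope f x y` and the mean ratio
`K(x,y) = (f x + f y)/(x + y)`: on the closed quadrant `H = (D + K)/2` and `G = (D - K)/2`.
By the mean value theorem `D(x,y)` is a value of `f'` between `x` and `y`, so `D` is continuous
wherever `f'` is; `K` is continuous away from the origin and tends to `0` there since
`f(t) = o(t)`. Lipschitz continuity bounds `|D|` and, with `f 0 = 0`, also `|K|` by `M_b`.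
-/

open Set Filter Topology NNReal

-- `Kker f 0 0 = 0` through the convention `x / 0 = 0`, matching `Hker f 0 0 = 0`.
noncomputable def Kker (f : ℝ → ℝ) (x y : ℝ) : ℝ := (f x + f y) / (x + y)

section DSlope

variable {𝕜 E : Type*} [NontriviallyNormedField 𝕜] [NormedAddCommGroup E] [NormedSpace 𝕜 E]
  {f : 𝕜 → E} {s : Set 𝕜} {x y : 𝕜}

theorem norm_dslope_le_of_lipschitzOn {K : ℝ≥0} (hf : LipschitzOnWith K f s)
    (hd : ∀ z ∈ s, ‖deriv f z‖ ≤ K) (hx : x ∈ s) (hy : y ∈ s) : ‖dslope f x y‖ ≤ K := by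
  rcases eq_or_ne y x with rfl | hyx
  · simpa [dslope_same] using hd y hy
  · rw [dslope_of_ne f hyx, slope, norm_smul, norm_inv,
      inv_mul_le_iff₀ (norm_pos_iff.2 (sub_ne_zero.2 hyx))]
    simpa [dist_eq_norm, mul_comm] using hf.dist_le_mul y hy x hx

theorem continuousWithinAt_dslope_uncurry_of_ne (hf : ContinuousOn f s) (hx : x ∈ s) (hy : y ∈ s)
    (hxy : x ≠ y) : ContinuousWithinAt (fun p : 𝕜 × 𝕜 => dslope f p.1 p.2) (s ×ˢ s) (x, y) := by
  have hslope : ContinuousWithinAt (fun p : 𝕜 × 𝕜 => slope f p.1 p.2) (s ×ˢ s) (x, y) :=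
    ((continuousWithinAt_snd.sub continuousWithinAt_fst).inv₀ (sub_ne_zero.2 hxy.symm)).smul
      (((hf y hy).comp continuousWithinAt_snd mapsTo_snd_prod).sub
        ((hf x hx).comp continuousWithinAt_fst mapsTo_fst_prod))
  refine hslope.congr_of_eventuallyEq ?_ (dslope_of_ne f hxy.symm)
  filter_upwards [nhdsWithin_le_nhds
    ((isOpen_ne_fun continuous_fst continuous_snd).mem_nhds hxy)] with p hp
  exact dslope_of_ne f (Ne.symm hp)

end DSlope

section Real

variable {f : ℝ → ℝ} {s : Set ℝ} {x y : ℝ}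

theorem exists_mem_uIcc_dslope_eq_deriv (hs : s.OrdConnected) (hf : DifferentiableOn ℝ f s)
    (hx : x ∈ s) (hy : y ∈ s) : ∃ c ∈ uIcc x y, dslope f x y = deriv f c := by
  have hsub := hs.uIcc_subset hx hy
  rcases lt_trichotomy x y with hxy | rfl | hxy
  · obtain ⟨c, hc, hc'⟩ := exists_deriv_eq_slope' f hxy
      (hf.continuousOn.mono (Icc_subset_uIcc.trans hsub))
      (hf.mono (Ioo_subset_Icc_self.trans (Icc_subset_uIcc.trans hsub)))
    exact ⟨c, Icc_subset_uIcc (Ioo_subset_Icc_self hc), by rw [dslope_of_ne f hxy.ne', hc']⟩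
  · exact ⟨x, left_mem_uIcc, dslope_same f x⟩
  · obtain ⟨c, hc, hc'⟩ := exists_deriv_eq_slope' f hxy
      (hf.continuousOn.mono (Icc_subset_uIcc'.trans hsub))
      (hf.mono (Ioo_subset_Icc_self.trans (Icc_subset_uIcc'.trans hsub)))
    exact ⟨c, Icc_subset_uIcc' (Ioo_subset_Icc_self hc),
      by rw [dslope_of_ne f hxy.ne, slope_comm, hc']⟩

theorem continuousWithinAt_dslope_uncurry_diag {a : ℝ} (hs : s.OrdConnected)
    (hf : DifferentiableOn ℝ f s) (hd : ContinuousWithinAt (deriv f) s a) :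
    ContinuousWithinAt (fun p : ℝ × ℝ => dslope f p.1 p.2) (s ×ˢ s) (a, a) := by
  rw [Metric.continuousWithinAt_iff] at hd ⊢
  intro ε hε
  obtain ⟨δ, hδ, hδ'⟩ := hd ε hε
  refine ⟨δ, hδ, fun {p} hp hpa => ?_⟩
  obtain ⟨c, hc, hc'⟩ := exists_mem_uIcc_dslope_eq_deriv hs hf hp.1 hp.2
  have h1 : |p.1 - a| < δ := (le_max_left _ _).trans_lt hpa
  have h2 : |p.2 - a| < δ := (le_max_right _ _).trans_lt hpa
  have hca : dist c a < δ := by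
    rw [Real.dist_eq, abs_lt]
    rw [abs_lt] at h1 h2
    rcases mem_uIcc.1 hc with hc | hc <;> constructor <;> linarith [hc.1, hc.2]
  simpa only [hc', dslope_same] using hδ' (hs.uIcc_subset hp.1 hp.2 hc) hca

theorem continuousOn_dslope_uncurry (hs : s.OrdConnected) (hf : DifferentiableOn ℝ f s)
    (hd : ContinuousOn (deriv f) s) :
    ContinuousOn (fun p : ℝ × ℝ => dslope f p.1 p.2) (s ×ˢ s) := by
  rintro ⟨x, y⟩ ⟨hx, hy⟩
  rcases eq_or_ne x y with rfl | hxy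
  · exact continuousWithinAt_dslope_uncurry_diag hs hf (hd x hx)
  · exact continuousWithinAt_dslope_uncurry_of_ne hf.continuousOn hx hy hxy

theorem norm_deriv_le_of_lipschitzOn_Icc {E : Type*} [NormedAddCommGroup E] [NormedSpace ℝ E]
    {g : ℝ → E} {a b : ℝ} (hab : a < b) {K : ℝ≥0} (hg : LipschitzOnWith K g (Icc a b))
    (hd : ContinuousOn (deriv g) (Icc a b)) (hx : x ∈ Icc a b) : ‖deriv g x‖ ≤ K := by
  rw [← closure_Ioo hab.ne] at hd hx
  exact le_on_closure (fun c hc => norm_deriv_le_of_lipschitzOn (Icc_mem_nhds hc.1 hc.2) hg)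
    hd.norm continuousOn_const hx

theorem hasDerivWithinAt_Ici_of_continuousWithinAt_deriv {a : ℝ}
    (hf : DifferentiableOn ℝ f (Ici a)) (hd : ContinuousWithinAt (deriv f) (Ici a) a) :
    HasDerivWithinAt f (deriv f a) (Ici a) a :=
  hasDerivWithinAt_Ici_of_tendsto_deriv hf (hf.continuousOn a self_mem_Ici)
    (mem_of_superset self_mem_nhdsWithin Ioi_subset_Ici_self)
    (hd.mono_left (nhdsWithin_mono a Ioi_subset_Ici_self))

theorem abs_Kker_le {K : ℝ≥0} (hf : LipschitzOnWith K f s) (h0 : f 0 = 0) (hs0 : 0 ∈ s)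
    (hx : x ∈ s) (hy : y ∈ s) (hx0 : 0 ≤ x) (hy0 : 0 ≤ y) : |Kker f x y| ≤ K := by
  have hlin : ∀ t ∈ s, 0 ≤ t → |f t| ≤ K * t := fun t ht ht0 => by
    simpa [h0, Real.dist_eq, abs_of_nonneg ht0] using hf.dist_le_mul t ht 0 hs0
  rw [Kker, abs_div, abs_of_nonneg (add_nonneg hx0 hy0)]
  refine div_le_of_le_mul₀ (add_nonneg hx0 hy0) K.2 ?_
  linarith [abs_add_le (f x) (f y), hlin x hx hx0, hlin y hy hy0]

theorem continuousWithinAt_Kker_of_add_ne_zero (hf : ContinuousOn f s) (hx : x ∈ s)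
    (hy : y ∈ s) (hxy : x + y ≠ 0) :
    ContinuousWithinAt (fun p : ℝ × ℝ => Kker f p.1 p.2) (s ×ˢ s) (x, y) :=
  (((hf x hx).comp continuousWithinAt_fst mapsTo_fst_prod).add
    ((hf y hy).comp continuousWithinAt_snd mapsTo_snd_prod)).div
    (continuousWithinAt_fst.add continuousWithinAt_snd) hxy

theorem continuousWithinAt_Kker_zero (hf : HasDerivWithinAt f 0 (Ici 0) 0) (h0 : f 0 = 0) :
    ContinuousWithinAt (fun p : ℝ × ℝ => Kker f p.1 p.2) (Ici 0 ×ˢ Ici 0) (0, 0) := by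
  have hlittle : (fun t => f t) =o[𝓝[Ici 0] 0] fun t => t := by
    simpa [h0] using hf.isLittleO
  rw [ContinuousWithinAt, nhdsWithin_prod_eq, Metric.tendsto_nhds]
  intro ε hε
  have hsmall : ∀ᶠ t in 𝓝[Ici 0] (0 : ℝ), 0 ≤ t ∧ |f t| ≤ ε / 2 * t := by
    filter_upwards [hlittle.def (half_pos hε), self_mem_nhdsWithin] with t ht ht0
    exact ⟨ht0, by simpa [abs_of_nonneg (mem_Ici.1 ht0)] using ht⟩
  filter_upwards [hsmall.prod_mk hsmall] with p ⟨⟨hx0, hx⟩, hy0, hy⟩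
  have hK : |Kker f p.1 p.2| ≤ ε / 2 := by
    rw [Kker, abs_div, abs_of_nonneg (add_nonneg hx0 hy0)]
    refine div_le_of_le_mul₀ (add_nonneg hx0 hy0) (half_pos hε).le ?_
    linarith [abs_add_le (f p.1) (f p.2)]
  have hK0 : Kker f 0 0 = 0 := by simp [Kker]
  rw [hK0, Real.dist_eq, sub_zero]
  linarith

theorem continuousOn_Kker (hf : ContinuousOn f (Ici 0)) (hf' : HasDerivWithinAt f 0 (Ici 0) 0)
    (h0 : f 0 = 0) : ContinuousOn (fun p : ℝ × ℝ => Kker f p.1 p.2) (Ici 0 ×ˢ Ici 0) := by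
  rintro ⟨x, y⟩ ⟨hx, hy⟩
  by_cases hxy : x + y = 0
  · obtain ⟨rfl, rfl⟩ : x = 0 ∧ y = 0 := by
      constructor <;> linarith [mem_Ici.1 hx, mem_Ici.1 hy]
    exact continuousWithinAt_Kker_zero hf' h0
  · exact continuousWithinAt_Kker_of_add_ne_zero hf hx hy hxy

theorem Hker_eq_of_nonneg (h0 : deriv f 0 = 0) (hx : 0 ≤ x) (hy : 0 ≤ y) :
    Hker f x y = (dslope f x y + Kker f x y) / 2 := by
  rw [Hker, Kker]
  split_ifs with hxy hx0
  · subst hxy hx0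
    simp [dslope_same, h0]
  · subst hxy
    rw [dslope_same]
    field_simp
  · have hsum : x + y ≠ 0 := by
      intro h
      exact hxy (by linarith)
    rw [dslope_of_ne f (Ne.symm hxy), slope_def_field]
    have hdiff : y - x ≠ 0 := sub_ne_zero.2 (Ne.symm hxy)
    rw [show x ^ 2 - y ^ 2 = -((y - x) * (x + y)) by ring]
    field_simp
    ring

theorem Gker_eq_of_nonneg (h0 : deriv f 0 = 0) (hx : 0 ≤ x) (hy : 0 ≤ y) :
    Gker f x y = (dslope f x y - Kker f x y) / 2 := by
  rw [Gker, Kker]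
  split_ifs with hxy hx0
  · subst hxy hx0
    simp [dslope_same, h0]
  · subst hxy
    rw [dslope_same]
    field_simp
  · have hsum : x + y ≠ 0 := by
      intro h
      exact hxy (by linarith)
    rw [dslope_of_ne f (Ne.symm hxy), slope_def_field]
    have hdiff : y - x ≠ 0 := sub_ne_zero.2 (Ne.symm hxy)
    rw [show x ^ 2 - y ^ 2 = -((y - x) * (x + y)) by ring]
    field_simp
    ring

end Real

theorem stmt15_general (f : ℝ → ℝ) (b : ℝ) (hb : 0 < b) (Mb : NNReal)
    (hf_diff : DifferentiableOn ℝ f (Set.Ici 0))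
    (hf_deriv_cont : ContinuousOn (deriv f) (Set.Ici 0))
    (hf0 : f 0 = 0) (hf'0 : deriv f 0 = 0)
    (hLip : LipschitzOnWith Mb f (Set.Icc 0 b)) :
    ContinuousOn (fun p : ℝ × ℝ => Hker f p.1 p.2) (Set.Icc 0 b ×ˢ Set.Icc 0 b) ∧
    ContinuousOn (fun p : ℝ × ℝ => Gker f p.1 p.2) (Set.Icc 0 b ×ˢ Set.Icc 0 b) ∧
    (∀ x ∈ Set.Icc (0:ℝ) b, ∀ y ∈ Set.Icc (0:ℝ) b,
      |Hker f x y| ≤ (3/2) * (Mb : ℝ) ∧ |Gker f x y| ≤ (Mb : ℝ)) := by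
  have hD : ContinuousOn (fun p : ℝ × ℝ => dslope f p.1 p.2) (Icc 0 b ×ˢ Icc 0 b) :=
    continuousOn_dslope_uncurry ordConnected_Icc (hf_diff.mono Icc_subset_Ici_self)
      (hf_deriv_cont.mono Icc_subset_Ici_self)
  have hf_hasDerivWithin : HasDerivWithinAt f 0 (Ici 0) 0 := by
    simpa [hf'0] using
      hasDerivWithinAt_Ici_of_continuousWithinAt_deriv hf_diff (hf_deriv_cont 0 self_mem_Ici)
  have hK : ContinuousOn (fun p : ℝ × ℝ => Kker f p.1 p.2) (Icc 0 b ×ˢ Icc 0 b) :=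
    (continuousOn_Kker hf_diff.continuousOn hf_hasDerivWithin hf0).mono
      (prod_mono Icc_subset_Ici_self Icc_subset_Ici_self)
  refine ⟨((hD.add hK).div_const 2).congr fun p hp => Hker_eq_of_nonneg hf'0 hp.1.1 hp.2.1,
    ((hD.sub hK).div_const 2).congr fun p hp => Gker_eq_of_nonneg hf'0 hp.1.1 hp.2.1,
    fun x hx y hy => ?_⟩
  have hDb : |dslope f x y| ≤ Mb :=
    norm_dslope_le_of_lipschitzOn hLip (fun z hz => norm_deriv_le_of_lipschitzOn_Icc hb hLip
      (hf_deriv_cont.mono Icc_subset_Ici_self) hz) hx hy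
  have hKb : |Kker f x y| ≤ Mb := abs_Kker_le hLip hf0 ⟨le_rfl, hb.le⟩ hx hy hx.1 hy.1
  rw [Hker_eq_of_nonneg hf'0 hx.1 hy.1, Gker_eq_of_nonneg hf'0 hx.1 hy.1]
  rw [abs_le] at hDb hKb
  constructor <;> rw [abs_le] <;> constructor <;> linarith [Mb.2]

/-- Lemma 11 (continuity and boundedness of the divergence kernels `H` and `G`):
if `f : [0,∞) → [0,∞)` is monotone increasing, continuously differentiable with
`f(0) = 0` and `f′(0) = 0`, and Lipschitz on `[0, b]` with constant `M_b`, then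
`H` and `G` are continuous on `[0,b]×[0,b]`, with `|H| ≤ (3/2)·M_b` and
`|G| ≤ M_b` there. -/
theorem stmt15 (f : ℝ → ℝ) (b : ℝ) (hb : 0 < b) (Mb : NNReal)
    (hf_nn : ∀ x ∈ Set.Ici (0:ℝ), 0 ≤ f x)
    (hf_mono : MonotoneOn f (Set.Ici 0))
    (hf_diff : DifferentiableOn ℝ f (Set.Ici 0))
    (hf_deriv_cont : ContinuousOn (deriv f) (Set.Ici 0))
    (hf0 : f 0 = 0) (hf'0 : deriv f 0 = 0)
    (hLip : LipschitzOnWith Mb f (Set.Icc 0 b)) :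
    ContinuousOn (fun p : ℝ × ℝ => Hker f p.1 p.2) (Set.Icc 0 b ×ˢ Set.Icc 0 b) ∧
    ContinuousOn (fun p : ℝ × ℝ => Gker f p.1 p.2) (Set.Icc 0 b ×ˢ Set.Icc 0 b) ∧
    (∀ x ∈ Set.Icc (0:ℝ) b, ∀ y ∈ Set.Icc (0:ℝ) b,
      |Hker f x y| ≤ (3/2) * (Mb : ℝ) ∧ |Gker f x y| ≤ (Mb : ℝ)) :=
  stmt15_general f b hb Mb hf_diff hf_deriv_cont hf0 hf'0 hLip
end
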